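/- arXiv:2210.07823 — 4 statements merged into one kernel-verified Lean document; each statement's English description precedes it below -/
import Mathlib

section
/- Fix a constant α ∈ (1/2, 1), let p = n^{−α}, and let ρ be any constant with ρ > 1/(2α−1). Then the probability that max over all permutations π of [n] of Overlap(π) is at least ρ·n tends to 0 as n → ∞. -/
open MeasureTheory Filter

noncomputable def bernoulliBool (p : ℝ) : Measure Bool :=
  ENNReal.ofReal p • Measure.dirac true + ENNReal.ofReal (1 - p) • Measure.dirac false

noncomputable def erMeasure (n : ℕ) (p : ℝ) : Measure (Fin n → Fin n → Bool) :=
  Measure.pi fun _ => Measure.pi fun _ => bernoulliBool p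

noncomputable def erPair (n : ℕ) (p : ℝ) :
    Measure ((Fin n → Fin n → Bool) × (Fin n → Fin n → Bool)) :=
  (erMeasure n p).prod (erMeasure n p)

/-- `overlap G G' π` : the number of pairs `i < j` such that `{i,j}` is an edge of `G`
and `{π i, π j}` is an edge of `G'` (edges are encoded by the Boolean value at the
ordered pair `i < j`). -/
noncomputable def overlap {n : ℕ} (G G' : Fin n → Fin n → Bool) (π : Equiv.Perm (Fin n)) : ℕ :=
  Set.ncard {e : Fin n × Fin n | e.1 < e.2 ∧ G e.1 e.2 = true ∧
    ((π e.1 < π e.2 ∧ G' (π e.1) (π e.2) = true) ∨ (π e.2 < π e.1 ∧ G' (π e.2) (π e.1) = true))}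

noncomputable def maxOverlap {n : ℕ} (G G' : Fin n → Fin n → Bool) : ℕ :=
  Finset.univ.sup fun π : Equiv.Perm (Fin n) => overlap G G' π

lemma bern_true {p : ℝ} : bernoulliBool p {true} = ENNReal.ofReal p := by
  simp [bernoulliBool, Measure.dirac_apply' _ (by trivial : MeasurableSet {true})]

lemma bern_prob {p : ℝ} (h0 : 0 ≤ p) (h1 : p ≤ 1) : IsProbabilityMeasure (bernoulliBool p) := by
  constructor
  simp [bernoulliBool]
  rw [← ENNReal.ofReal_add h0 (by linarith)]
  norm_num

lemma meas_all_true {n : ℕ} {p : ℝ} (h0 : 0 ≤ p) (h1 : p ≤ 1)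
    (S : Finset (Fin n × Fin n)) :
    erMeasure n p {G | ∀ e ∈ S, G e.1 e.2 = true} = (ENNReal.ofReal p) ^ S.card := by
  classical
  haveI := bern_prob h0 h1
  have hset : {G : Fin n → Fin n → Bool | ∀ e ∈ S, G e.1 e.2 = true}
      = Set.pi Set.univ (fun i => Set.pi Set.univ
          (fun j => if (i, j) ∈ S then ({true} : Set Bool) else Set.univ)) := by
    ext G
    simp only [Set.mem_setOf_eq, Set.mem_pi, Set.mem_univ, forall_true_left]
    constructor
    · intro h i j
      split_ifs with hm
      · exact h (i, j) hm
      · trivial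
    · intro h e he
      have := h e.1 e.2
      rw [if_pos he] at this
      exact this
  rw [hset, erMeasure, Measure.pi_pi]
  have hinner : ∀ i : Fin n, (Measure.pi fun _ : Fin n => bernoulliBool p)
      (Set.pi Set.univ (fun j => if (i, j) ∈ S then ({true} : Set Bool) else Set.univ))
      = ∏ j : Fin n, (if (i, j) ∈ S then ENNReal.ofReal p else 1) := by
    intro i
    rw [Measure.pi_pi]
    congr 1
    ext j
    split_ifs with hm
    · exact bern_true
    · exact measure_univ
  simp_rw [hinner]
  rw [← Finset.prod_product']
  rw [Finset.univ_product_univ]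
  rw [Finset.prod_ite_mem, Finset.univ_inter, Finset.prod_const]

/-- sorted pair -/
def sp {n : ℕ} (e : Fin n × Fin n) : Fin n × Fin n := if e.1 < e.2 then e else (e.2, e.1)

lemma sp_inj {n : ℕ} (π : Equiv.Perm (Fin n)) {a b c d : Fin n} (hab : a < b) (hcd : c < d)
    (h : sp (π a, π b) = sp (π c, π d)) : a = c ∧ b = d := by
  unfold sp at h
  split_ifs at h with h1 h2 h2 <;>
    rw [Prod.ext_iff] at h <;> simp only at h <;>
    obtain ⟨hx, hy⟩ := h
  · exact ⟨π.injective hx, π.injective hy⟩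
  · have h3 : a = d := π.injective hx
    have h4 : b = c := π.injective hy
    subst h3; subst h4
    exact absurd (hab.trans hcd) (lt_irrefl _)
  · have h3 : b = c := π.injective hx
    have h4 : a = d := π.injective hy
    subst h3; subst h4
    exact absurd (hab.trans hcd) (lt_irrefl _)
  · exact ⟨π.injective hy, π.injective hx⟩

lemma union_bound {n k : ℕ} {p : ℝ} (h0 : 0 ≤ p) (h1 : p ≤ 1) :
    erPair n p {ω : (Fin n → Fin n → Bool) × (Fin n → Fin n → Bool) |
        k ≤ maxOverlap ω.1 ω.2} ≤
      (Fintype.card (Equiv.Perm (Fin n)) *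
        ((Finset.univ.filter (fun e : Fin n × Fin n => e.1 < e.2)).card.choose k)) *
        (ENNReal.ofReal p) ^ (2 * k) := by
  classical
  haveI := bern_prob h0 h1
  haveI : IsProbabilityMeasure (erMeasure n p) := by
    unfold erMeasure; infer_instance
  set P : Finset (Fin n × Fin n) := Finset.univ.filter (fun e => e.1 < e.2) with hP
  set I : Finset (Equiv.Perm (Fin n) × Finset (Fin n × Fin n)) :=
    Finset.univ ×ˢ P.powersetCard k with hI
  set E : Equiv.Perm (Fin n) × Finset (Fin n × Fin n) →
      Set ((Fin n → Fin n → Bool) × (Fin n → Fin n → Bool)) := fun x =>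
    {G | ∀ e ∈ x.2, G e.1 e.2 = true} ×ˢ
      {G' | ∀ e ∈ x.2.image (fun e => sp (x.1 e.1, x.1 e.2)), G' e.1 e.2 = true} with hE
  have hsub : {ω : (Fin n → Fin n → Bool) × (Fin n → Fin n → Bool) |
      k ≤ maxOverlap ω.1 ω.2} ⊆ ⋃ x ∈ I, E x := by
    rintro ⟨G, G'⟩ hω
    simp only [Set.mem_setOf_eq] at hω
    obtain ⟨π, -, hπ⟩ := Finset.exists_mem_eq_sup Finset.univ
      ⟨1, Finset.mem_univ 1⟩ (fun π : Equiv.Perm (Fin n) => overlap G G' π)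
    rw [maxOverlap, hπ] at hω
    set T := {e : Fin n × Fin n | e.1 < e.2 ∧ G e.1 e.2 = true ∧
      ((π e.1 < π e.2 ∧ G' (π e.1) (π e.2) = true) ∨
       (π e.2 < π e.1 ∧ G' (π e.2) (π e.1) = true))} with hT
    have hTfin : T.Finite := Set.toFinite _
    have hcard : k ≤ hTfin.toFinset.card := by
      rwa [overlap, Set.ncard_eq_toFinset_card _ hTfin] at hω
    obtain ⟨S, hS, hScard⟩ := Finset.exists_subset_card_eq hcard
    have hmemT : ∀ e ∈ S, e ∈ T := fun e he => hTfin.mem_toFinset.mp (hS he)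
    refine Set.mem_biUnion (show (π, S) ∈ I from ?_) ?_
    · rw [hI, Finset.mem_product]
      refine ⟨Finset.mem_univ _, Finset.mem_powersetCard.mpr ⟨?_, hScard⟩⟩
      intro e he
      rw [hP, Finset.mem_filter]
      exact ⟨Finset.mem_univ _, (hmemT e he).1⟩
    · rw [hE]
      refine ⟨fun e he => (hmemT e he).2.1, ?_⟩
      intro e' he'
      obtain ⟨e, he, rfl⟩ := Finset.mem_image.mp he'
      obtain ⟨-, -, hor⟩ := hmemT e he
      unfold sp
      split_ifs with hlt
      · rcases hor with ⟨-, h⟩ | ⟨h2, -⟩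
        · exact h
        · exact absurd (hlt.trans h2) (lt_irrefl _)
      · rcases hor with ⟨h2, -⟩ | ⟨-, h⟩
        · exact absurd h2 hlt
        · exact h
  calc erPair n p {ω : (Fin n → Fin n → Bool) × (Fin n → Fin n → Bool) |
        k ≤ maxOverlap ω.1 ω.2}
      ≤ erPair n p (⋃ x ∈ I, E x) := measure_mono hsub
    _ ≤ ∑ x ∈ I, erPair n p (E x) := measure_biUnion_finset_le _ _
    _ ≤ ∑ _x ∈ I, (ENNReal.ofReal p) ^ (2 * k) := by
        refine Finset.sum_le_sum fun x hx => ?_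
        rw [hI, Finset.mem_product] at hx
        obtain ⟨-, hx2⟩ := hx
        obtain ⟨hsubP, hcardk⟩ := Finset.mem_powersetCard.mp hx2
        have himg : (x.2.image (fun e => sp (x.1 e.1, x.1 e.2))).card = k := by
          rw [Finset.card_image_of_injOn, hcardk]
          intro e he e' he' heq
          have h1 : e.1 < e.2 := (Finset.mem_filter.mp (hsubP he)).2
          have h2 : e'.1 < e'.2 := (Finset.mem_filter.mp (hsubP he')).2
          obtain ⟨ha, hb⟩ := sp_inj x.1 h1 h2 heq
          exact Prod.ext ha hb
        rw [hE]
        simp only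
        rw [erPair, Measure.prod_prod, meas_all_true h0 h1, meas_all_true h0 h1,
          hcardk, himg, ← pow_add, two_mul]
    _ = (Fintype.card (Equiv.Perm (Fin n)) * (P.card.choose k)) *
        (ENNReal.ofReal p) ^ (2 * k) := by
        rw [Finset.sum_const, hI, Finset.card_product, Finset.card_univ,
          Finset.card_powersetCard, nsmul_eq_mul]
        push_cast
        ring

lemma anal (α ρ : ℝ) (hα₁ : 1 / 2 < α) (hα₂ : α < 1) (hρ : 1 / (2 * α - 1) < ρ) :
    ∀ᶠ n : ℕ in atTop,
      ((n.factorial : ℝ) * (((n ^ 2).choose ⌈ρ * n⌉₊ : ℕ) : ℝ)) *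
          ((n : ℝ) ^ (-α)) ^ (2 * ⌈ρ * n⌉₊) ≤ Real.exp (-(n : ℝ)) := by
  have hβ : 0 < 2 * α - 1 := by linarith
  have hρ1 : 1 < ρ := lt_trans (one_lt_one_div hβ (by linarith)) hρ
  have hρ0 : 0 < ρ := by linarith
  have hδ : 0 < ρ * (2 * α - 1) - 1 := by
    have := (div_lt_iff₀ hβ).mp hρ
    linarith
  set β := 2 * α - 1 with hβdef
  set δ := ρ * β - 1 with hδdef
  set C := (ρ + 1) * |1 - Real.log ρ| with hCdef
  have hlogev : ∀ᶠ n : ℕ in atTop, (C + 1) / δ ≤ Real.log n :=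
    (Real.tendsto_log_atTop.comp tendsto_natCast_atTop_atTop).eventually_ge_atTop _
  filter_upwards [hlogev, eventually_ge_atTop 1] with n hlogn hn1
  set k := ⌈ρ * n⌉₊ with hkdef
  have hnpos : (0 : ℝ) < n := by exact_mod_cast hn1
  have hn1' : (1 : ℝ) ≤ n := by exact_mod_cast hn1
  set L := Real.log n with hLdef
  have hL0 : 0 ≤ L := Real.log_nonneg hn1'
  have hk_lb : ρ * n ≤ (k : ℝ) := Nat.le_ceil _
  have hk_ub : (k : ℝ) ≤ ρ * n + 1 := (Nat.ceil_lt_add_one (by positivity)).le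
  have hkpos : (0 : ℝ) < k := lt_of_lt_of_le (by nlinarith) hk_lb
  have hq0 : (0 : ℝ) < (n : ℝ) ^ (-α) := Real.rpow_pos_of_pos hnpos _
  set q := (n : ℝ) ^ (-α) with hqdef
  have hA : (n.factorial : ℝ) ≤ (n : ℝ) ^ n := by
    exact_mod_cast Nat.cast_le.mpr (Nat.factorial_le_pow n)
  have hB : (((n ^ 2).choose k : ℕ) : ℝ) ≤ ((n : ℝ) ^ 2) ^ k / (k.factorial : ℝ) := by
    have := Nat.choose_le_pow_div (α := ℝ) k (n ^ 2)
    push_cast at this ⊢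
    convert this using 3
  have hC1 : (1 : ℝ) / (k.factorial : ℝ) ≤ Real.exp k / (k : ℝ) ^ k := by
    rw [div_le_div_iff₀ (by positivity) (by positivity), one_mul]
    calc ((k : ℝ) ^ k) = (k : ℝ) ^ k / (k.factorial : ℝ) * k.factorial := by
          field_simp
      _ ≤ Real.exp k * k.factorial := by
          gcongr
          exact Real.pow_div_factorial_le_exp (x := (k:ℝ)) (Nat.cast_nonneg k) k
  have hlogk : Real.log ρ + L ≤ Real.log k := by
    calc Real.log ρ + L = Real.log (ρ * n) := (Real.log_mul (ne_of_gt hρ0) (ne_of_gt hnpos)).symm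
      _ ≤ Real.log k := Real.log_le_log (by positivity) hk_lb
  have key : (n : ℝ) * L + (k : ℝ) * (2 * L) + ((k : ℝ) - (k : ℝ) * Real.log k)
      + (2 * (k : ℝ)) * (-α * L) ≤ -(n : ℝ) := by
    have hk0 : (0 : ℝ) ≤ k := hkpos.le
    have h1 : (k : ℝ) * (Real.log ρ + L) ≤ (k : ℝ) * Real.log k :=
      mul_le_mul_of_nonneg_left hlogk hk0
    have h2 : (k : ℝ) * (1 - Real.log ρ) ≤ (ρ + 1) * n * |1 - Real.log ρ| := by
      rcases le_or_gt 0 (1 - Real.log ρ) with hpos | hneg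
      · have hk2 : (k : ℝ) ≤ (ρ + 1) * n := by nlinarith
        calc (k : ℝ) * (1 - Real.log ρ) ≤ ((ρ + 1) * n) * (1 - Real.log ρ) :=
              mul_le_mul_of_nonneg_right hk2 hpos
          _ = (ρ + 1) * n * |1 - Real.log ρ| := by rw [abs_of_nonneg hpos]
      · have : (k : ℝ) * (1 - Real.log ρ) ≤ 0 := mul_nonpos_of_nonneg_of_nonpos hk0 hneg.le
        have : (0:ℝ) ≤ (ρ + 1) * n * |1 - Real.log ρ| := by positivity
        linarith
    have h3 : ρ * n * (β * L) ≤ (k : ℝ) * (β * L) :=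
      mul_le_mul_of_nonneg_right hk_lb (by positivity)
    have h4 : (n : ℝ) * (C + 1) ≤ (n : ℝ) * (δ * L) := by
      have : C + 1 ≤ δ * L := (div_le_iff₀ hδ).mp hlogn |>.trans_eq (mul_comm _ _)
      exact mul_le_mul_of_nonneg_left this hnpos.le
    rw [hCdef] at h4
    rw [hδdef] at h4
    rw [hβdef] at h3 h4
    linarith [h1, h2, h3, h4]
  have hq2k : q ^ (2 * k) = Real.exp ((2 * (k : ℝ)) * (-α * L)) := by
    rw [hqdef, ← Real.exp_log (show (0:ℝ) < ((n:ℝ) ^ (-α)) ^ (2*k) by positivity),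
      Real.log_pow, Real.log_rpow hnpos]
    push_cast
    ring_nf
    rw [hLdef]
  have hnn : (n : ℝ) ^ n = Real.exp ((n : ℝ) * L) := by
    rw [← Real.exp_log (show (0:ℝ) < (n:ℝ) ^ n by positivity), Real.log_pow]
  have hn2k : ((n : ℝ) ^ 2) ^ k = Real.exp ((k : ℝ) * (2 * L)) := by
    rw [← Real.exp_log (show (0:ℝ) < ((n:ℝ) ^ 2) ^ k by positivity), Real.log_pow,
      Real.log_pow]
    push_cast
    ring_nf
    rw [hLdef]
  have hexpk : Real.exp (k : ℝ) / (k : ℝ) ^ k = Real.exp ((k : ℝ) - (k : ℝ) * Real.log k) := by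
    rw [Real.exp_sub, ← Real.exp_log (show (0:ℝ) < (k:ℝ) ^ k by positivity), Real.log_pow]
  calc (n.factorial : ℝ) * (((n ^ 2).choose k : ℕ) : ℝ) * q ^ (2 * k)
      ≤ (n : ℝ) ^ n * (((n : ℝ) ^ 2) ^ k / (k.factorial : ℝ)) * q ^ (2 * k) := by
        gcongr
    _ = (n : ℝ) ^ n * ((n : ℝ) ^ 2) ^ k * ((1:ℝ) / (k.factorial : ℝ)) * q ^ (2 * k) := by
        ring
    _ ≤ (n : ℝ) ^ n * ((n : ℝ) ^ 2) ^ k * (Real.exp k / (k : ℝ) ^ k) * q ^ (2 * k) := by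
        gcongr
    _ = Real.exp ((n : ℝ) * L + (k : ℝ) * (2 * L) + ((k : ℝ) - (k : ℝ) * Real.log k)
        + (2 * (k : ℝ)) * (-α * L)) := by
        rw [hnn, hn2k, hexpk, hq2k, ← Real.exp_add, ← Real.exp_add, ← Real.exp_add]
    _ ≤ Real.exp (-(n : ℝ)) := Real.exp_le_exp.mpr key

theorem stmt1 (α ρ : ℝ) (hα₁ : 1 / 2 < α) (hα₂ : α < 1) (hρ : 1 / (2 * α - 1) < ρ) :
    Tendsto
      (fun n : ℕ =>
        erPair n ((n : ℝ) ^ (-α))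
          {ω | ρ * (n : ℝ) ≤ (maxOverlap ω.1 ω.2 : ℝ)})
      atTop (nhds 0) := by
  have hupper : Tendsto (fun n : ℕ => ENNReal.ofReal (Real.exp (-(n : ℝ)))) atTop (nhds 0) := by
    rw [show (0 : ENNReal) = ENNReal.ofReal 0 from (ENNReal.ofReal_zero).symm]
    exact ENNReal.tendsto_ofReal
      (Real.tendsto_exp_neg_atTop_nhds_zero.comp tendsto_natCast_atTop_atTop)
  refine tendsto_of_tendsto_of_tendsto_of_le_of_le' tendsto_const_nhds hupper
    (Eventually.of_forall fun n => zero_le) ?_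
  filter_upwards [anal α ρ hα₁ hα₂ hρ, eventually_ge_atTop 1] with n hanal hn1
  set p := (n : ℝ) ^ (-α) with hpdef
  have hn1' : (1 : ℝ) ≤ n := by exact_mod_cast hn1
  have hp0 : 0 ≤ p := Real.rpow_nonneg (by positivity) _
  have hp1 : p ≤ 1 := Real.rpow_le_one_of_one_le_of_nonpos hn1' (by linarith)
  set k := ⌈ρ * (n : ℝ)⌉₊ with hkdef
  have hset : {ω : (Fin n → Fin n → Bool) × (Fin n → Fin n → Bool) |
      ρ * (n : ℝ) ≤ (maxOverlap ω.1 ω.2 : ℝ)}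
      = {ω | k ≤ maxOverlap ω.1 ω.2} :=
    Set.ext fun ω => by
      simp only [Set.mem_setOf_eq, hkdef, Nat.ceil_le]
  rw [hset]
  refine le_trans (union_bound hp0 hp1) ?_
  have hM : (Finset.univ.filter (fun e : Fin n × Fin n => e.1 < e.2)).card ≤ n ^ 2 := by
    refine le_trans (Finset.card_filter_le _ _) ?_
    rw [Finset.card_univ]
    simp [Fintype.card_prod, Fintype.card_fin, pow_two]
  have hcoef : Fintype.card (Equiv.Perm (Fin n)) *
      ((Finset.univ.filter (fun e : Fin n × Fin n => e.1 < e.2)).card.choose k)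
      ≤ n.factorial * ((n ^ 2).choose k) := by
    apply Nat.mul_le_mul
    · rw [Fintype.card_perm, Fintype.card_fin]
    · exact Nat.choose_le_choose k hM
  calc ((Fintype.card (Equiv.Perm (Fin n)) : ENNReal) *
        (((Finset.univ.filter (fun e : Fin n × Fin n => e.1 < e.2)).card.choose k : ℕ) : ENNReal)) *
        (ENNReal.ofReal p) ^ (2 * k)
      ≤ (↑(n.factorial * ((n ^ 2).choose k)) : ENNReal) * (ENNReal.ofReal p) ^ (2 * k) := by
        rw [← Nat.cast_mul]
        exact mul_le_mul_left (Nat.cast_le.mpr hcoef) _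
    _ = ENNReal.ofReal (((n.factorial * ((n ^ 2).choose k) : ℕ) : ℝ) * p ^ (2 * k)) := by
        rw [ENNReal.ofReal_mul (by positivity), ENNReal.ofReal_natCast,
          ENNReal.ofReal_pow hp0]
    _ ≤ ENNReal.ofReal (Real.exp (-(n : ℝ))) := by
        apply ENNReal.ofReal_le_ofReal
        push_cast
        push_cast at hanal
        exact hanal
end

section
/- Let α' ∈ (1/2, 1), η > 0, and let 𝐓 be an α'-balanced tree as in the context with ξ leaves, χ non-leaf vertices and ζ edges, additionally satisfying 0 < χ − (2α'−1)ζ. Consider G = G(n, p) with p = n^{−α'}. Then there exist constants c₁, c₂ > 0 depending only on η, α' and 𝐓 such that for all sufficiently large n, for every subset R ⊂ [n] with |R| ≥ ηn and every ordered ξ-tuple L of distinct vertices of [n] whose coordinates avoid R, one has c₁ · n^χ p^ζ ≤ P[L ⋈_G R] ≤ c₂ · n^χ p^ζ. -/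
open MeasureTheory Filter

/-- A leaf of a graph: a vertex with exactly one neighbor. -/
def IsLeaf {V : Type*} (T : SimpleGraph V) (v : V) : Prop :=
  (T.neighborSet v).ncard = 1

/-- `{i, j}` is an edge of the graph encoded by `G` (the Boolean value at the ordered
pair with increasing coordinates). -/
def edgePresent {n : ℕ} (G : Fin n → Fin n → Bool) (i j : Fin n) : Prop :=
  (i < j ∧ G i j = true) ∨ (j < i ∧ G j i = true)

/-- `L ⋈_G U` : there is an injection `φ` of the tree `T` into `[n]` sending the i-th leaf
(under the enumeration `le`) to `L i`, sending the non-leaf vertices into `U` avoiding the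
coordinates of `L`, and sending every edge of `T` to an edge of `G`. -/
def JoinsSet {V : Type*} (T : SimpleGraph V) {ξ : ℕ} (le : Fin ξ → V) {n : ℕ}
    (G : Fin n → Fin n → Bool) (L : Fin ξ → Fin n) (U : Set (Fin n)) : Prop :=
  ∃ φ : V → Fin n, Function.Injective φ ∧
    (∀ i, φ (le i) = L i) ∧
    (∀ v : V, ¬ IsLeaf T v → φ v ∈ U ∧ ∀ i, φ v ≠ L i) ∧
    (∀ u v : V, T.Adj u v → edgePresent G (φ u) (φ v))

/-- `L ⋈_G Q` : as `JoinsSet`, with the restriction of `φ` to the non-leaf vertices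
(under the enumeration `qe`) prescribed coordinatewise by the tuple `Q`. -/
def JoinsTuple {V : Type*} (T : SimpleGraph V) {ξ χ : ℕ} (le : Fin ξ → V) (qe : Fin χ → V)
    {n : ℕ} (G : Fin n → Fin n → Bool) (L : Fin ξ → Fin n) (Q : Fin χ → Fin n) : Prop :=
  ∃ φ : V → Fin n, Function.Injective φ ∧
    (∀ i, φ (le i) = L i) ∧
    (∀ j, φ (qe j) = Q j) ∧
    (∀ u v : V, T.Adj u v → edgePresent G (φ u) (φ v))

/-- The tree `T` is `α'`-balanced: for every proper subgraph `F` containing all the leaves,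
`|V(T) ∖ V(F)| < α' · |E(T) ∖ E(F)|`. -/
def BalancedTree {V : Type*} (α' : ℝ) (T : SimpleGraph V) : Prop :=
  ∀ F : T.Subgraph, F ≠ ⊤ → {v | IsLeaf T v} ⊆ F.verts →
    ((Set.univ \ F.verts).ncard : ℝ) < α' * ((T.edgeSet \ F.edgeSet).ncard : ℝ)

open Function
open scoped Classical


instance bernoulliBool_finite (p : ℝ) : IsFiniteMeasure (bernoulliBool p) := by
  constructor
  rw [bernoulliBool]
  simp only [Measure.add_apply, Measure.smul_apply, smul_eq_mul, measure_univ, mul_one]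
  exact ENNReal.add_lt_top.2 ⟨ENNReal.ofReal_lt_top, ENNReal.ofReal_lt_top⟩

lemma bernoulliBool_apply (p : ℝ) (b : Bool) :
    bernoulliBool p {b} = ENNReal.ofReal (if b then p else 1 - p) := by
  cases b <;> simp [bernoulliBool, Measure.dirac_apply]

noncomputable def wt (n : ℕ) (p : ℝ) (G : Fin n → Fin n → Bool) : ℝ :=
  ∏ i, ∏ j, (if G i j then p else 1 - p)

lemma wt_nonneg {n : ℕ} {p : ℝ} (hp0 : 0 ≤ p) (hp1 : p ≤ 1) (G : Fin n → Fin n → Bool) :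
    0 ≤ wt n p G := by
  apply Finset.prod_nonneg; intro i _
  apply Finset.prod_nonneg; intro j _
  split <;> linarith

lemma erMeasure_singleton {n : ℕ} {p : ℝ} (hp0 : 0 ≤ p) (hp1 : p ≤ 1)
    (G : Fin n → Fin n → Bool) :
    erMeasure n p {G} = ENNReal.ofReal (wt n p G) := by
  have hrow : ∀ g : Fin n → Bool,
      (Measure.pi fun _ : Fin n => bernoulliBool p) {g}
        = ENNReal.ofReal (∏ j, (if g j then p else 1 - p)) := by
    intro g
    rw [← Set.univ_pi_singleton g, Measure.pi_pi]
    rw [ENNReal.ofReal_prod_of_nonneg (by intro j _; split <;> linarith)]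
    exact Finset.prod_congr rfl fun j _ => bernoulliBool_apply p (g j)
  rw [erMeasure, ← Set.univ_pi_singleton G, Measure.pi_pi]
  rw [wt, ENNReal.ofReal_prod_of_nonneg (by
    intro i _; apply Finset.prod_nonneg; intro j _; split <;> linarith)]
  exact Finset.prod_congr rfl fun i _ => hrow (G i)

lemma erMeasure_apply {n : ℕ} {p : ℝ} (hp0 : 0 ≤ p) (hp1 : p ≤ 1)
    (A : Set (Fin n → Fin n → Bool)) :
    erMeasure n p A
      = ENNReal.ofReal (∑ G ∈ Finset.univ.filter (· ∈ A), wt n p G) := by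
  have hA : A = ⋃ G ∈ Finset.univ.filter (· ∈ A), ({G} : Set (Fin n → Fin n → Bool)) := by
    ext G; simp
  rw [ENNReal.ofReal_sum_of_nonneg (fun G _ => wt_nonneg hp0 hp1 G)]
  conv_lhs => rw [hA]
  rw [measure_biUnion_finset]
  · exact Finset.sum_congr rfl fun G _ => erMeasure_singleton hp0 hp1 G
  · intro x _ y _ hxy
    simp [Function.onFun, Set.disjoint_singleton_left, hxy]
  · intro G _; exact measurableSet_singleton G

lemma sum_wt_cyl {n : ℕ} {p : ℝ} (hp0 : 0 ≤ p) (hp1 : p ≤ 1) (S : Finset (Fin n × Fin n)) :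
    ∑ G ∈ Finset.univ.filter
        (fun G : Fin n → Fin n → Bool => ∀ x ∈ S, G x.1 x.2 = true), wt n p G
      = p ^ S.card := by
  set f : Fin n → Fin n → Bool → ℝ := fun i j b =>
    (if b then p else 1 - p) * (if (i, j) ∈ S then (if b then 1 else 0) else 1) with hf
  have step1 : ∑ G ∈ Finset.univ.filter
        (fun G : Fin n → Fin n → Bool => ∀ x ∈ S, G x.1 x.2 = true), wt n p G
      = ∑ G : Fin n → Fin n → Bool, ∏ i, ∏ j, f i j (G i j) := by
    rw [Finset.sum_filter]
    refine Finset.sum_congr rfl fun G _ => ?_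
    by_cases hG : ∀ x ∈ S, G x.1 x.2 = true
    · rw [if_pos hG, wt]
      refine Finset.prod_congr rfl fun i _ => Finset.prod_congr rfl fun j _ => ?_
      by_cases hij : (i, j) ∈ S
      · have := hG (i, j) hij
        simp only [hf, hij, if_true, this, mul_one]
      · simp only [hf, hij, if_false, mul_one]
    · rw [if_neg hG]
      push_neg at hG
      obtain ⟨x, hxS, hx⟩ := hG
      have hx' : G x.1 x.2 = false := by simpa using hx
      symm
      apply Finset.prod_eq_zero (Finset.mem_univ x.1)
      apply Finset.prod_eq_zero (Finset.mem_univ x.2)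
      simp [hf, hxS, hx']
  have step2 : ∑ G : Fin n → Fin n → Bool, ∏ i, ∏ j, f i j (G i j)
      = ∏ i, ∏ j, (f i j true + f i j false) := by
    have outer := Finset.prod_univ_sum (fun _ : Fin n => (Finset.univ : Finset (Fin n → Bool)))
      (fun i g => ∏ j, f i j (g j))
    rw [Fintype.piFinset_univ] at outer
    rw [← outer]
    refine Finset.prod_congr rfl fun i _ => ?_
    have inner := Finset.prod_univ_sum (fun _ : Fin n => (Finset.univ : Finset Bool))
      (fun j b => f i j b)
    rw [Fintype.piFinset_univ] at inner
    rw [← inner]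
    refine Finset.prod_congr rfl fun j _ => ?_
    simp [Fintype.sum_bool, add_comm]
  have step3 : ∀ i j, f i j true + f i j false = (if (i, j) ∈ S then p else 1) := by
    intro i j
    by_cases hij : (i, j) ∈ S <;> simp [hf, hij] <;> ring
  rw [step1, step2]
  simp only [step3]
  have : ∏ i, ∏ j, (if (i, j) ∈ S then p else (1:ℝ))
      = ∏ x ∈ (Finset.univ ×ˢ Finset.univ : Finset (Fin n × Fin n)),
          (if x ∈ S then p else 1) := by
    rw [Finset.prod_product]
  rw [this, Finset.univ_product_univ]
  rw [Finset.prod_ite, Finset.prod_const, Finset.prod_const, one_pow, mul_one]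
  congr 1
  rw [Finset.filter_univ_mem]

def pos {n : ℕ} (a b : Fin n) : Fin n × Fin n := if a ≤ b then (a, b) else (b, a)

lemma pos_comm {n : ℕ} (a b : Fin n) : pos a b = pos b a := by
  unfold pos
  rcases le_or_gt a b with h | h
  · rcases lt_or_eq_of_le h with h' | h'
    · rw [if_pos h, if_neg (not_le.2 h')]
    · subst h'; simp
  · rw [if_neg (not_le.2 h), if_pos h.le]

noncomputable def sym2ToPos {n : ℕ} : Sym2 (Fin n) → Fin n × Fin n :=
  Sym2.lift ⟨pos, pos_comm⟩

lemma sym2ToPos_mk {n : ℕ} (a b : Fin n) : sym2ToPos s(a, b) = pos a b := rfl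

lemma mk_pos_eq {n : ℕ} (a b : Fin n) : s((pos a b).1, (pos a b).2) = s(a, b) := by
  unfold pos; split
  · rfl
  · exact Sym2.eq_swap

lemma sym2ToPos_injective {n : ℕ} : Function.Injective (sym2ToPos (n := n)) := by
  intro e₁ e₂ h
  induction e₁ using Sym2.ind with
  | _ a b =>
    induction e₂ using Sym2.ind with
    | _ c d =>
      have h1 := mk_pos_eq a b
      have h2 := mk_pos_eq c d
      rw [sym2ToPos_mk, sym2ToPos_mk] at h
      rw [← h1, ← h2, h]

lemma pos_true_iff {n : ℕ} {G : Fin n → Fin n → Bool} {a b : Fin n} (hab : a ≠ b) :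
    G (pos a b).1 (pos a b).2 = true ↔ edgePresent G a b := by
  rcases lt_trichotomy a b with h | h | h
  · rw [pos, if_pos h.le]
    constructor
    · intro hG; exact Or.inl ⟨h, hG⟩
    · rintro (⟨_, hG⟩ | ⟨h', _⟩)
      · exact hG
      · exact absurd h (asymm h')
  · exact absurd h hab
  · rw [pos, if_neg (not_le.2 h)]
    constructor
    · intro hG; exact Or.inr ⟨h, hG⟩
    · rintro (⟨h', _⟩ | ⟨_, hG⟩)
      · exact absurd h (asymm h')
      · exact hG

section Graph

variable {V : Type} [Fintype V] (T : SimpleGraph V) {n : ℕ}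

noncomputable def edgePos (φ : V → Fin n) : Finset (Fin n × Fin n) :=
  (T.edgeFinset.image (Sym2.map φ)).image sym2ToPos

lemma card_edgePos {φ : V → Fin n} (hφ : Injective φ) :
    (edgePos T φ).card = T.edgeFinset.card := by
  rw [edgePos, Finset.card_image_of_injective _ sym2ToPos_injective,
    Finset.card_image_of_injective _ (Sym2.map.injective hφ)]

lemma mem_cyl_iff {φ : V → Fin n} (hφ : Injective φ) (G : Fin n → Fin n → Bool) :
    (∀ x ∈ edgePos T φ, G x.1 x.2 = true) ↔
      ∀ u v, T.Adj u v → edgePresent G (φ u) (φ v) := by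
  constructor
  · intro hG u v huv
    have hne : φ u ≠ φ v := fun h => (T.ne_of_adj huv) (hφ h)
    rw [← pos_true_iff hne]
    apply hG
    rw [edgePos]
    refine Finset.mem_image.2 ⟨Sym2.map φ s(u, v), Finset.mem_image.2
      ⟨s(u, v), SimpleGraph.mem_edgeFinset.2 huv, rfl⟩, ?_⟩
    rw [Sym2.map_pair_eq, sym2ToPos_mk]
  · intro hG x hx
    rw [edgePos] at hx
    obtain ⟨e', he', rfl⟩ := Finset.mem_image.1 hx
    obtain ⟨e, he, rfl⟩ := Finset.mem_image.1 he'
    induction e using Sym2.ind with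
    | _ u v =>
      have huv : T.Adj u v := SimpleGraph.mem_edgeFinset.1 he
      have hne : φ u ≠ φ v := fun h => (T.ne_of_adj huv) (hφ h)
      rw [Sym2.map_pair_eq, sym2ToPos_mk]
      exact (pos_true_iff hne).2 (hG u v huv)

noncomputable def tFin (φ ψ : V → Fin n) : Finset (Sym2 V) :=
  T.edgeFinset.filter (fun e => Sym2.map ψ e ∈ T.edgeFinset.image (Sym2.map φ))

noncomputable def sFin (φ ψ : V → Fin n) : Finset V :=
  Finset.univ.filter (fun v => ψ v ∈ Set.range φ)

lemma tFin_subset (φ ψ : V → Fin n) : tFin T φ ψ ⊆ T.edgeFinset :=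
  Finset.filter_subset _ _

lemma card_inter_le (φ ψ : V → Fin n) :
    (edgePos T φ ∩ edgePos T ψ).card ≤ (tFin T φ ψ).card := by
  have hsub : edgePos T φ ∩ edgePos T ψ ⊆
      (tFin T φ ψ).image (fun e => sym2ToPos (Sym2.map ψ e)) := by
    intro x hx
    obtain ⟨hxφ, hxψ⟩ := Finset.mem_inter.1 hx
    rw [edgePos] at hxφ hxψ
    obtain ⟨e₂', he₂', rfl⟩ := Finset.mem_image.1 hxψ
    obtain ⟨e₂, he₂, rfl⟩ := Finset.mem_image.1 he₂'
    obtain ⟨e₁', he₁', heq⟩ := Finset.mem_image.1 hxφ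
    obtain ⟨e₁, he₁, rfl⟩ := Finset.mem_image.1 he₁'
    have : Sym2.map φ e₁ = Sym2.map ψ e₂ := sym2ToPos_injective heq
    refine Finset.mem_image.2 ⟨e₂, ?_, rfl⟩
    rw [tFin, Finset.mem_filter]
    exact ⟨he₂, Finset.mem_image.2 ⟨e₁, he₁, this⟩⟩
  calc (edgePos T φ ∩ edgePos T ψ).card
      ≤ ((tFin T φ ψ).image (fun e => sym2ToPos (Sym2.map ψ e))).card :=
        Finset.card_le_card hsub
    _ ≤ (tFin T φ ψ).card := Finset.card_image_le

noncomputable def pullSub (φ ψ : V → Fin n) : T.Subgraph where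
  verts := {v | ψ v ∈ Set.range φ}
  Adj u v := T.Adj u v ∧ Sym2.map ψ s(u, v) ∈ T.edgeFinset.image (Sym2.map φ)
  adj_sub h := h.1
  edge_vert := by
    rintro u v ⟨huv, hmem⟩
    obtain ⟨e₁, he₁, heq⟩ := Finset.mem_image.1 hmem
    have : ψ u ∈ Sym2.map φ e₁ := by
      rw [heq, Sym2.map_pair_eq]
      exact Sym2.mem_mk_left _ _
    obtain ⟨a, _, ha⟩ := Sym2.mem_map.1 this
    exact ⟨a, ha⟩
  symm := by
    constructor
    rintro u v ⟨huv, hmem⟩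
    refine ⟨huv.symm, ?_⟩
    rwa [Sym2.eq_swap]

lemma pullSub_verts (φ ψ : V → Fin n) : (pullSub T φ ψ).verts = ↑(sFin φ ψ) := by
  ext v; simp [pullSub, sFin]

lemma pullSub_edgeSet (φ ψ : V → Fin n) : (pullSub T φ ψ).edgeSet = ↑(tFin T φ ψ) := by
  ext e
  induction e using Sym2.ind with
  | _ u v =>
    rw [SimpleGraph.Subgraph.mem_edgeSet]
    simp only [pullSub, tFin, Finset.coe_filter, Set.mem_setOf_eq, SimpleGraph.mem_edgeFinset]
    tauto

end Graph

section Count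

variable {V : Type} [Fintype V] (T : SimpleGraph V) {n ξ : ℕ}
  (le : Fin ξ → V) (L : Fin ξ → Fin n) (R : Set (Fin n))

noncomputable def embF : Finset (V → Fin n) :=
  Finset.univ.filter (fun φ => Injective φ ∧ (∀ i, φ (le i) = L i) ∧
    ∀ v, ¬ IsLeaf T v → φ v ∈ R)

variable {T le}

noncomputable def idx (hle : Injective le) (hleRange : Set.range le = {v | IsLeaf T v})
    (v : V) (h : IsLeaf T v) : Fin ξ :=
  (Equiv.ofInjective le hle).symm ⟨v, by rw [hleRange]; exact h⟩

lemma le_idx (hle : Injective le) (hleRange : Set.range le = {v | IsLeaf T v})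
    (v : V) (h : IsLeaf T v) : le (idx hle hleRange v h) = v := by
  unfold idx
  exact congrArg Subtype.val ((Equiv.ofInjective le hle).apply_symm_apply _)

lemma leaf_le (hleRange : Set.range le = {v | IsLeaf T v}) (i : Fin ξ) :
    IsLeaf T (le i) := by
  have : le i ∈ Set.range le := Set.mem_range_self i
  rwa [hleRange] at this

-- determination of φ by its values on non-leaves
lemma phi_determined (hle : Injective le) (hleRange : Set.range le = {v | IsLeaf T v})
    {φ ψ : V → Fin n} (hφ : ∀ i, φ (le i) = L i) (hψ : ∀ i, ψ (le i) = L i)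
    (h : ∀ v, ¬ IsLeaf T v → φ v = ψ v) : φ = ψ := by
  funext v
  by_cases hv : IsLeaf T v
  · rw [← le_idx hle hleRange v hv, hφ, hψ]
  · exact h v hv

lemma upper_card (hle : Injective le) (hleRange : Set.range le = {v | IsLeaf T v}) :
    (Finset.univ.filter (fun φ : V → Fin n => Injective φ ∧ ∀ i, φ (le i) = L i)).card
      ≤ n ^ (Finset.univ.filter (fun v => ¬ IsLeaf T v)).card := by
  have : (Finset.univ.filter (fun φ : V → Fin n => Injective φ ∧ ∀ i, φ (le i) = L i)).card
      ≤ Fintype.card ({v // ¬ IsLeaf T v} → Fin n) := by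
    rw [← Finset.card_univ]
    apply Finset.card_le_card_of_injOn (fun φ => fun v : {v // ¬ IsLeaf T v} => φ v.1)
      (fun _ _ => Finset.mem_univ _)
    intro φ hφ ψ hψ hfg
    simp only [Finset.coe_filter, Set.mem_setOf_eq, Finset.mem_univ, true_and] at hφ hψ
    refine phi_determined (L := L) hle hleRange hφ.2 hψ.2 fun v hv => ?_
    exact congrFun hfg ⟨v, hv⟩
  rwa [Fintype.card_fun, Fintype.card_fin, Fintype.card_subtype] at this

lemma lower_card (hle : Injective le) (hleRange : Set.range le = {v | IsLeaf T v})
    (hL : Injective L) (hLR : ∀ i, L i ∉ R) :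
    (Fintype.card {x : Fin n // x ∈ R ∧ x ∉ Set.range L}).descFactorial
        (Finset.univ.filter (fun v => ¬ IsLeaf T v)).card
      ≤ (embF T le L R).card := by
  rw [← Fintype.card_subtype, ← Fintype.card_embedding_eq, ← Fintype.card_coe (embF T le L R)]
  apply Fintype.card_le_of_injective
    (fun e => (⟨fun v => if h : IsLeaf T v then L (idx hle hleRange v h)
      else (e ⟨v, h⟩).1, ?_⟩ : {φ // φ ∈ embF T le L R}))
  case _ =>
    -- injectivity of e ↦ φ_e
    intro e e' hee
    have h : ∀ v : {v // ¬ IsLeaf T v}, (e v : Fin n) = (e' v : Fin n) := by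
      intro v
      have := congrArg (fun q : {φ // φ ∈ embF T le L R} => q.1 v.1) hee
      simpa [dif_neg v.2] using this
    ext v
    exact congrArg Fin.val (h v)
  case _ =>
    -- φ_e ∈ embF
    rw [embF, Finset.mem_filter]
    refine ⟨Finset.mem_univ _, ?_, ?_, ?_⟩
    · intro u v huv
      dsimp only at huv
      by_cases hu : IsLeaf T u <;> by_cases hv : IsLeaf T v
      · rw [dif_pos hu, dif_pos hv] at huv
        rw [← le_idx hle hleRange u hu, ← le_idx hle hleRange v hv, hL huv]
      · rw [dif_pos hu, dif_neg hv] at huv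
        exact absurd ⟨_, huv⟩ (e ⟨v, hv⟩).2.2
      · rw [dif_neg hu, dif_pos hv] at huv
        exact absurd ⟨_, huv.symm⟩ (e ⟨u, hu⟩).2.2
      · rw [dif_neg hu, dif_neg hv] at huv
        have : e ⟨u, hu⟩ = e ⟨v, hv⟩ := Subtype.ext huv
        simpa using e.injective this
    · intro i
      have h := leaf_le hleRange i
      dsimp only
      rw [dif_pos h]
      congr 1
      apply hle
      rw [le_idx hle hleRange _ h]
    · intro v hv
      dsimp only
      rw [dif_neg hv]
      exact (e ⟨v, hv⟩).2.1

lemma R_card_lb (hL : Injective L) :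
    R.ncard ≤ Fintype.card {x : Fin n // x ∈ R ∧ x ∉ Set.range L} + ξ := by
  classical
  have hR : R.ncard = (Finset.univ.filter (· ∈ R)).card := by
    rw [← Set.ncard_coe_finset]
    congr 1
    ext x; simp
  rw [hR, Fintype.card_subtype]
  have hsub : Finset.univ.filter (· ∈ R)
      ⊆ (Finset.univ.filter (fun x => x ∈ R ∧ x ∉ Set.range L)) ∪ Finset.univ.image L := by
    intro x hx
    simp only [Finset.mem_filter, Finset.mem_univ, true_and] at hx
    by_cases hxL : x ∈ Set.range L
    · apply Finset.mem_union_right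
      obtain ⟨i, rfl⟩ := hxL
      exact Finset.mem_image_of_mem L (Finset.mem_univ i)
    · refine Finset.mem_union_left _ ?_
      simp only [Finset.mem_filter, Finset.mem_univ, true_and]
      exact ⟨hx, hxL⟩
  calc (Finset.univ.filter (· ∈ R)).card
      ≤ _ := Finset.card_le_card hsub
    _ ≤ _ + (Finset.univ.image L).card := Finset.card_union_le _ _
    _ ≤ _ + ξ := by
        gcongr
        calc (Finset.univ.image L).card ≤ (Finset.univ : Finset (Fin ξ)).card :=
          Finset.card_image_le
        _ = ξ := by simp

lemma descFactorial_ge (N k : ℕ) : (N + 1 - k) ^ k ≤ N.descFactorial k := by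
  rw [Nat.descFactorial_eq_prod_range]
  calc (N + 1 - k) ^ k = ∏ _i ∈ Finset.range k, (N + 1 - k) := by
        rw [Finset.prod_const, Finset.card_range]
    _ ≤ ∏ i ∈ Finset.range k, (N - i) := Finset.prod_le_prod' (fun i hi => by
        rw [Finset.mem_range] at hi; omega)

end Count

section Count2

open SimpleGraph

variable {V : Type} [Fintype V] {T : SimpleGraph V} {n ξ : ℕ}
  {le : Fin ξ → V} {L : Fin ξ → Fin n} {R : Set (Fin n)}

lemma fiber_card (hle : Injective le) (hleRange : Set.range le = {v | IsLeaf T v})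
    (hm : 1 ≤ Fintype.card V) (hn : 1 ≤ n)
    {φ : V → Fin n} (hφ : Injective φ) (κ : Finset V × Finset (Sym2 V)) :
    ((embF T le L R).filter (fun ψ => (sFin φ ψ, tFin T φ ψ) = κ)).card
      ≤ Fintype.card V ^ (Finset.univ.filter (fun v => ¬ IsLeaf T v)).card
        * n ^ ((Finset.univ \ κ.1).card) := by
  set C : V → Finset (Fin n) := fun v =>
    if h : IsLeaf T v then {L (idx hle hleRange v h)}
    else (if v ∈ κ.1 then Finset.univ.image φ else Finset.univ) with hC
  have hsub : (embF T le L R).filter (fun ψ => (sFin φ ψ, tFin T φ ψ) = κ)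
      ⊆ Fintype.piFinset C := by
    intro ψ hψ
    rw [Finset.mem_filter] at hψ
    obtain ⟨hmem, hcls⟩ := hψ
    rw [embF, Finset.mem_filter] at hmem
    have hleL := hmem.2.2.1
    rw [Fintype.mem_piFinset]
    intro v
    by_cases h : IsLeaf T v
    · have h1 : ψ (le (idx hle hleRange v h)) = L (idx hle hleRange v h) := hleL _
      rw [le_idx hle hleRange v h] at h1
      simp only [hC, dif_pos h, Finset.mem_singleton]
      exact h1
    · simp only [hC, dif_neg h]
      by_cases hv : v ∈ κ.1
      · rw [if_pos hv]
        have hsv : v ∈ sFin φ ψ := by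
          have : sFin φ ψ = κ.1 := congrArg Prod.fst hcls
          rw [this]; exact hv
        rw [sFin, Finset.mem_filter] at hsv
        obtain ⟨a, ha⟩ := hsv.2
        exact Finset.mem_image.2 ⟨a, Finset.mem_univ a, ha⟩
      · rw [if_neg hv]; exact Finset.mem_univ _
  set D : V → ℕ := fun v =>
    if ¬ IsLeaf T v ∧ v ∈ κ.1 then Fintype.card V else if v ∉ κ.1 then n else 1 with hD
  have hpoint : ∀ v, (C v).card ≤ D v := by
    intro v
    by_cases h : IsLeaf T v
    · simp only [hC, dif_pos h, Finset.card_singleton, hD]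
      split
      · exact hm
      · split
        · exact hn
        · exact Nat.le_refl 1
    · by_cases hv : v ∈ κ.1
      · simp only [hC, dif_neg h, if_pos hv, hD, h, hv, not_false_iff, true_and, if_true]
        rw [Finset.card_image_of_injective _ hφ, Finset.card_univ]
      · simp only [hC, dif_neg h, if_neg hv, hD]
        rw [if_neg (by tauto), if_pos hv, Finset.card_univ, Fintype.card_fin]
  calc ((embF T le L R).filter (fun ψ => (sFin φ ψ, tFin T φ ψ) = κ)).card
      ≤ (Fintype.piFinset C).card := Finset.card_le_card hsub
    _ = ∏ v, (C v).card := Fintype.card_piFinset C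
    _ ≤ ∏ v, D v := Finset.prod_le_prod' (fun v _ => hpoint v)
    _ ≤ _ := by
        rw [hD, Finset.prod_ite, Finset.prod_const, Finset.prod_ite, Finset.prod_const,
          Finset.prod_const, one_pow, mul_one]
        apply Nat.mul_le_mul
        · apply Nat.pow_le_pow_right hm
          apply Finset.card_le_card
          intro v hv
          simp only [Finset.mem_filter, Finset.mem_univ, true_and] at hv ⊢
          tauto
        · apply Nat.pow_le_pow_right hn
          apply Finset.card_le_card
          intro v hv
          simp only [Finset.mem_filter, Finset.mem_univ, true_and] at hv
          rw [Finset.sdiff_eq_filter]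
          simp only [Finset.mem_filter, Finset.mem_univ, true_and]
          tauto
        
lemma balance_apply {α' : ℝ} {ζ : ℕ} (hbal : BalancedTree α' T)
    (hleRange : Set.range le = {v | IsLeaf T v}) (hζE : T.edgeFinset.card = ζ)
    {φ ψ : V → Fin n} (hφL : ∀ i, φ (le i) = L i) (hψL : ∀ i, ψ (le i) = L i)
    (hne : (sFin φ ψ, tFin T φ ψ) ≠ ((Finset.univ : Finset V), T.edgeFinset)) :
    ((Finset.univ \ sFin φ ψ).card : ℝ) < α' * ((ζ : ℝ) - (tFin T φ ψ).card) := by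
  have hFne : pullSub T φ ψ ≠ ⊤ := by
    intro htop
    apply hne
    have h1 : (sFin φ ψ : Set V) = Set.univ := by
      rw [← pullSub_verts T φ ψ, htop, Subgraph.verts_top]
    have h2 : (tFin T φ ψ : Set (Sym2 V)) = ↑T.edgeFinset := by
      rw [← pullSub_edgeSet T φ ψ, htop, Subgraph.edgeSet_top, SimpleGraph.coe_edgeFinset]
    refine Prod.ext ?_ (Finset.coe_injective h2)
    exact Finset.coe_injective (by rw [h1, Finset.coe_univ])
  have hleaves : {v | IsLeaf T v} ⊆ (pullSub T φ ψ).verts := by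
    intro v hv
    have : v ∈ Set.range le := by rw [hleRange]; exact hv
    obtain ⟨i, rfl⟩ := this
    show ψ (le i) ∈ Set.range φ
    rw [hψL i, ← hφL i]
    exact ⟨le i, rfl⟩
  have hmain := hbal _ hFne hleaves
  have hv : (Set.univ \ (pullSub T φ ψ).verts).ncard = (Finset.univ \ sFin φ ψ).card := by
    rw [pullSub_verts T φ ψ, ← Finset.coe_univ, ← Finset.coe_sdiff, Set.ncard_coe_finset]
  have ht : (tFin T φ ψ).card ≤ ζ := hζE ▸ Finset.card_le_card (tFin_subset T φ ψ)
  have hedge : (T.edgeSet \ (pullSub T φ ψ).edgeSet).ncard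
      = ζ - (tFin T φ ψ).card := by
    rw [pullSub_edgeSet T φ ψ, ← SimpleGraph.coe_edgeFinset, ← Finset.coe_sdiff,
      Set.ncard_coe_finset, Finset.card_sdiff_of_subset (tFin_subset T φ ψ), hζE]
  rw [hv, hedge] at hmain
  rwa [Nat.cast_sub ht] at hmain

end Count2

set_option maxHeartbeats 2000000 in
theorem stmt5 (α' η : ℝ) (hα₁ : 1 / 2 < α') (hα₂ : α' < 1) (hη : 0 < η)
    (V : Type) [Fintype V] (T : SimpleGraph V) (hT : T.IsTree)
    (ξ χ ζ : ℕ)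
    (le : Fin ξ → V) (hle : Function.Injective le)
    (hleRange : Set.range le = {v | IsLeaf T v})
    (hχ : {v : V | ¬ IsLeaf T v}.ncard = χ)
    (hζ : T.edgeSet.ncard = ζ)
    (hbal : BalancedTree α' T)
    (hcap : 0 < (χ : ℝ) - (2 * α' - 1) * (ζ : ℝ)) :
    ∃ c₁ c₂ : ℝ, 0 < c₁ ∧ 0 < c₂ ∧
      ∀ᶠ n : ℕ in atTop, ∀ (R : Set (Fin n)) (L : Fin ξ → Fin n),
        Function.Injective L → (∀ i, L i ∉ R) → η * (n : ℝ) ≤ (R.ncard : ℝ) →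
        ENNReal.ofReal (c₁ * ((n : ℝ) ^ χ * ((n : ℝ) ^ (-α')) ^ ζ)) ≤
            erMeasure n ((n : ℝ) ^ (-α')) {G | JoinsSet T le G L R} ∧
          erMeasure n ((n : ℝ) ^ (-α')) {G | JoinsSet T le G L R} ≤
            ENNReal.ofReal (c₂ * ((n : ℝ) ^ χ * ((n : ℝ) ^ (-α')) ^ ζ)) := by
  have hVne : Nonempty V := hT.isConnected.nonempty
  set m := Fintype.card V with hm
  have hm1 : 1 ≤ m := Fintype.card_pos
  have hmR : (0:ℝ) < (m:ℝ) := by exact_mod_cast hm1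
  set χf := (Finset.univ.filter (fun v => ¬ IsLeaf T v)).card with hχf
  have hχfχ : χf = χ := by
    rw [hχf, ← hχ, Set.ncard_eq_toFinset_card', Set.toFinset_setOf]
  have hζE : T.edgeFinset.card = ζ := by
    rw [← hζ, ← Set.ncard_coe_finset, SimpleGraph.coe_edgeFinset]
  set K := Fintype.card (Finset V × Finset (Sym2 V)) with hK
  have hK1 : 1 ≤ K := Fintype.card_pos
  have hKR : (0:ℝ) < (K:ℝ) := by exact_mod_cast hK1
  refine ⟨(η/2)^χ / (2 * (m:ℝ)^χ), 1, by positivity, one_pos, ?_⟩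
  have hev2 : ∀ᶠ n : ℕ in atTop, 2 * ((ξ:ℝ) + χ + 1) ≤ η * n := by
    have ht : Tendsto (fun n : ℕ => η * (n:ℝ)) atTop atTop :=
      (tendsto_natCast_atTop_atTop).const_mul_atTop hη
    exact ht.eventually_ge_atTop _
  have hev3 : ∀ᶠ n : ℕ in atTop, ∀ κ : Finset V × Finset (Sym2 V),
      (κ.2.card ≤ ζ ∧ ((Finset.univ \ κ.1).card : ℝ) < α' * ((ζ : ℝ) - κ.2.card)) →
      ((n:ℝ)) ^ ((Finset.univ \ κ.1).card) * ((n:ℝ)^(-α')) ^ (ζ - κ.2.card) ≤ 1 / K := by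
    rw [Filter.eventually_all]
    intro κ
    by_cases hκ : κ.2.card ≤ ζ ∧ ((Finset.univ \ κ.1).card : ℝ) < α' * ((ζ : ℝ) - κ.2.card)
    · set a := (Finset.univ \ κ.1).card with ha
      set b := ζ - κ.2.card with hb
      have hbc : (b:ℝ) = (ζ:ℝ) - κ.2.card := by
        rw [hb, Nat.cast_sub hκ.1]
      have hc : 0 < α' * b - a := by rw [hbc]; linarith [hκ.2]
      have htend : Tendsto (fun n : ℕ => ((n:ℝ)) ^ (-(α' * b - a))) atTop (nhds 0) :=
        (tendsto_rpow_neg_atTop hc).comp tendsto_natCast_atTop_atTop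
      have hKpos : (0:ℝ) < 1 / K := by positivity
      filter_upwards [htend.eventually (gt_mem_nhds hKpos), eventually_ge_atTop 1]
        with N hsmall hN1 _
      have hNpos : (0:ℝ) < N := by exact_mod_cast hN1
      have hrw : ((N:ℝ)) ^ a * ((N:ℝ)^(-α')) ^ b = ((N:ℝ)) ^ (-(α' * b - a)) := by
        rw [← Real.rpow_natCast ((N:ℝ)^(-α')) b, ← Real.rpow_mul hNpos.le,
          ← Real.rpow_natCast (N:ℝ) a, ← Real.rpow_add hNpos]
        ring_nf
      rw [hrw]
      exact hsmall.le
    · exact Filter.Eventually.of_forall (fun N h => absurd h hκ)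
  filter_upwards [eventually_ge_atTop 1, hev2, hev3] with n h1 h2 h3
  intro R L hL hLR hRcard
  set p := ((n:ℝ))^(-α') with hpdef
  have hn0 : (0:ℝ) < n := by exact_mod_cast h1
  have hp0 : 0 < p := Real.rpow_pos_of_pos hn0 _
  have hp1 : p ≤ 1 :=
    Real.rpow_le_one_of_one_le_of_nonpos (by exact_mod_cast h1) (by linarith)
  set Φ := embF T le L R with hΦdef
  have hΦmem : ∀ φ ∈ Φ, Injective φ ∧ (∀ i, φ (le i) = L i) ∧
      ∀ v, ¬ IsLeaf T v → φ v ∈ R := by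
    intro φ hφ
    rw [hΦdef, embF, Finset.mem_filter] at hφ
    exact hφ.2
  set J := Finset.univ.filter (· ∈ {G | JoinsSet T le G L R}) with hJdef
  have hμ : erMeasure n p {G | JoinsSet T le G L R}
      = ENNReal.ofReal (∑ G ∈ J, wt n p G) := erMeasure_apply hp0.le hp1 _
  have hsumG : ∀ S : Finset (Fin n × Fin n),
      (∑ G : Fin n → Fin n → Bool, (if (∀ x ∈ S, G x.1 x.2 = true) then wt n p G else 0))
        = p ^ S.card := by
    intro S
    rw [← Finset.sum_filter]
    exact sum_wt_cyl hp0.le hp1 S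
  -- upper bound
  have hupper : ∑ G ∈ J, wt n p G ≤ (n:ℝ) ^ χ * p ^ ζ := by
    set Φ' := Finset.univ.filter
      (fun φ : V → Fin n => Injective φ ∧ ∀ i, φ (le i) = L i) with hΦ'
    have hJsub : ∀ G ∈ J, ∃ φ ∈ Φ', (∀ x ∈ edgePos T φ, G x.1 x.2 = true) := by
      intro G hG
      rw [hJdef, Finset.mem_filter] at hG
      obtain ⟨φ, hinj, hleL, _, hedges⟩ := hG.2
      refine ⟨φ, ?_, (mem_cyl_iff T hinj G).2 hedges⟩
      rw [hΦ', Finset.mem_filter]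
      exact ⟨Finset.mem_univ _, hinj, hleL⟩
    have hstep1 : ∑ G ∈ J, wt n p G
        ≤ ∑ G ∈ J, ∑ φ ∈ Φ',
            (if (∀ x ∈ edgePos T φ, G x.1 x.2 = true) then wt n p G else 0) := by
      apply Finset.sum_le_sum
      intro G hG
      obtain ⟨φ, hφ, hcyl⟩ := hJsub G hG
      have h0 : wt n p G
          ≤ (if (∀ x ∈ edgePos T φ, G x.1 x.2 = true) then wt n p G else 0) := by
        rw [if_pos hcyl]
      refine h0.trans (Finset.single_le_sum
        (f := fun ψ => if (∀ x ∈ edgePos T ψ, G x.1 x.2 = true) then wt n p G else 0)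
        (fun ψ _ => ?_) hφ)
      split
      · exact wt_nonneg hp0.le hp1 G
      · exact le_rfl
    have hstep2 : ∀ φ ∈ Φ', (∑ G ∈ J,
        (if (∀ x ∈ edgePos T φ, G x.1 x.2 = true) then wt n p G else 0)) ≤ p ^ ζ := by
      intro φ hφ
      have hinj : Injective φ := by
        rw [hΦ', Finset.mem_filter] at hφ; exact hφ.2.1
      calc ∑ G ∈ J, (if (∀ x ∈ edgePos T φ, G x.1 x.2 = true) then wt n p G else 0)
          ≤ ∑ G : Fin n → Fin n → Bool,
              (if (∀ x ∈ edgePos T φ, G x.1 x.2 = true) then wt n p G else 0) := by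
            apply Finset.sum_le_sum_of_subset_of_nonneg (Finset.subset_univ J)
            intro G _ _
            split
            · exact wt_nonneg hp0.le hp1 G
            · exact le_rfl
        _ = p ^ (edgePos T φ).card := hsumG _
        _ = p ^ ζ := by rw [card_edgePos T hinj, hζE]
    have hΦ'card : (Φ'.card : ℝ) ≤ (n:ℝ) ^ χ := by
      have h := upper_card (L := L) hle hleRange
      rw [← hχf, hχfχ] at h
      calc (Φ'.card : ℝ) ≤ ((n ^ χ : ℕ) : ℝ) := by exact_mod_cast h
        _ = (n:ℝ) ^ χ := by push_cast; ring
    calc ∑ G ∈ J, wt n p G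
        ≤ ∑ G ∈ J, ∑ φ ∈ Φ',
            (if (∀ x ∈ edgePos T φ, G x.1 x.2 = true) then wt n p G else 0) := hstep1
      _ = ∑ φ ∈ Φ', ∑ G ∈ J,
            (if (∀ x ∈ edgePos T φ, G x.1 x.2 = true) then wt n p G else 0) :=
          Finset.sum_comm
      _ ≤ ∑ _φ ∈ Φ', p ^ ζ := Finset.sum_le_sum hstep2
      _ = (Φ'.card : ℝ) * p ^ ζ := by rw [Finset.sum_const, nsmul_eq_mul]
      _ ≤ (n:ℝ) ^ χ * p ^ ζ := by
          apply mul_le_mul_of_nonneg_right hΦ'card (by positivity)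
  -- lower bound
  have hlower : (η/2)^χ / (2 * (m:ℝ)^χ) * ((n:ℝ) ^ χ * p ^ ζ) ≤ ∑ G ∈ J, wt n p G := by
    have hΦinj : ∀ φ ∈ Φ, Injective φ := fun φ hφ => (hΦmem φ hφ).1
    set X : (Fin n → Fin n → Bool) → ℝ := fun G =>
      ((Φ.filter (fun φ => ∀ x ∈ edgePos T φ, G x.1 x.2 = true)).card : ℝ) with hX
    have hX0 : ∀ G, 0 ≤ X G := fun G => Nat.cast_nonneg _
    have hXind : ∀ G, X G = ∑ φ ∈ Φ,
        (if (∀ x ∈ edgePos T φ, G x.1 x.2 = true) then (1:ℝ) else 0) := by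
      intro G
      rw [hX]
      dsimp only
      rw [Finset.card_filter]
      push_cast
      rfl
    have hcardφ : ∀ φ ∈ Φ, (edgePos T φ).card = ζ := fun φ hφ => by
      rw [card_edgePos T (hΦinj φ hφ), hζE]
    have he1 : (∑ G : Fin n → Fin n → Bool, wt n p G * X G) = (Φ.card : ℝ) * p ^ ζ := by
      have hx : ∀ G, wt n p G * X G
          = ∑ φ ∈ Φ, (if (∀ x ∈ edgePos T φ, G x.1 x.2 = true) then wt n p G else 0) := by
        intro G
        rw [hXind G, Finset.mul_sum]
        refine Finset.sum_congr rfl fun φ _ => ?_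
        rw [mul_ite, mul_one, mul_zero]
      calc (∑ G : Fin n → Fin n → Bool, wt n p G * X G)
          = ∑ G : Fin n → Fin n → Bool, ∑ φ ∈ Φ,
              (if (∀ x ∈ edgePos T φ, G x.1 x.2 = true) then wt n p G else 0) :=
            Finset.sum_congr rfl fun G _ => hx G
        _ = ∑ φ ∈ Φ, ∑ G : Fin n → Fin n → Bool,
              (if (∀ x ∈ edgePos T φ, G x.1 x.2 = true) then wt n p G else 0) :=
            Finset.sum_comm
        _ = ∑ φ ∈ Φ, p ^ ζ :=
            Finset.sum_congr rfl fun φ hφ => by rw [hsumG, hcardφ φ hφ]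
        _ = (Φ.card : ℝ) * p ^ ζ := by rw [Finset.sum_const, nsmul_eq_mul]
    have he2 : (∑ G : Fin n → Fin n → Bool, wt n p G * X G ^ 2)
        = ∑ φ ∈ Φ, ∑ ψ ∈ Φ, p ^ ((edgePos T φ ∪ edgePos T ψ).card) := by
      have hx : ∀ G, wt n p G * X G ^ 2
          = ∑ φ ∈ Φ, ∑ ψ ∈ Φ,
            (if (∀ x ∈ edgePos T φ ∪ edgePos T ψ, G x.1 x.2 = true)
              then wt n p G else 0) := by
        intro G
        rw [sq, hXind G, Finset.sum_mul_sum, Finset.mul_sum]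
        refine Finset.sum_congr rfl fun φ _ => ?_
        rw [Finset.mul_sum]
        refine Finset.sum_congr rfl fun ψ _ => ?_
        by_cases h1 : (∀ x ∈ edgePos T φ, G x.1 x.2 = true)
        · by_cases h2 : (∀ x ∈ edgePos T ψ, G x.1 x.2 = true)
          · rw [if_pos h1, if_pos h2, if_pos (Finset.forall_mem_union.mpr ⟨h1, h2⟩)]
            ring
          · rw [if_pos h1, if_neg h2,
              if_neg (fun hc => h2 (Finset.forall_mem_union.mp hc).2)]
            ring
        · by_cases h2 : (∀ x ∈ edgePos T ψ, G x.1 x.2 = true)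
          · rw [if_neg h1, if_pos h2,
              if_neg (fun hc => h1 (Finset.forall_mem_union.mp hc).1)]
            ring
          · rw [if_neg h1, if_neg h2,
              if_neg (fun hc => h1 (Finset.forall_mem_union.mp hc).1)]
            ring
      calc (∑ G : Fin n → Fin n → Bool, wt n p G * X G ^ 2)
          = ∑ G : Fin n → Fin n → Bool, ∑ φ ∈ Φ, ∑ ψ ∈ Φ,
              (if (∀ x ∈ edgePos T φ ∪ edgePos T ψ, G x.1 x.2 = true)
                then wt n p G else 0) :=
            Finset.sum_congr rfl fun G _ => hx G
        _ = ∑ φ ∈ Φ, ∑ G : Fin n → Fin n → Bool, ∑ ψ ∈ Φ,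
              (if (∀ x ∈ edgePos T φ ∪ edgePos T ψ, G x.1 x.2 = true)
                then wt n p G else 0) := Finset.sum_comm
        _ = ∑ φ ∈ Φ, ∑ ψ ∈ Φ, ∑ G : Fin n → Fin n → Bool,
              (if (∀ x ∈ edgePos T φ ∪ edgePos T ψ, G x.1 x.2 = true)
                then wt n p G else 0) :=
            Finset.sum_congr rfl fun φ _ => Finset.sum_comm
        _ = ∑ φ ∈ Φ, ∑ ψ ∈ Φ, p ^ ((edgePos T φ ∪ edgePos T ψ).card) :=
            Finset.sum_congr rfl fun φ _ => Finset.sum_congr rfl fun ψ _ => hsumG _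
    set A := ∑ G ∈ Finset.univ.filter (fun G => 0 < X G), wt n p G with hA
    have hCS : (∑ G : Fin n → Fin n → Bool, wt n p G * X G) ^ 2
        ≤ A * (∑ G : Fin n → Fin n → Bool, wt n p G * X G ^ 2) := by
      have h := Finset.sum_mul_sq_le_sq_mul_sq Finset.univ
        (fun G => if 0 < X G then Real.sqrt (wt n p G) else 0)
        (fun G => Real.sqrt (wt n p G) * X G)
      have e1eq : (∑ G : Fin n → Fin n → Bool,
          (if 0 < X G then Real.sqrt (wt n p G) else 0) * (Real.sqrt (wt n p G) * X G))
          = ∑ G : Fin n → Fin n → Bool, wt n p G * X G := by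
        refine Finset.sum_congr rfl fun G _ => ?_
        by_cases hxg : 0 < X G
        · rw [if_pos hxg, ← mul_assoc, Real.mul_self_sqrt (wt_nonneg hp0.le hp1 G)]
        · have hz : X G = 0 := le_antisymm (not_lt.1 hxg) (hX0 G)
          rw [if_neg hxg, hz, zero_mul, mul_zero]
      have e2eq : (∑ G : Fin n → Fin n → Bool, (Real.sqrt (wt n p G) * X G) ^ 2)
          = ∑ G : Fin n → Fin n → Bool, wt n p G * X G ^ 2 := by
        refine Finset.sum_congr rfl fun G _ => ?_
        rw [mul_pow, Real.sq_sqrt (wt_nonneg hp0.le hp1 G)]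
      have aeq : (∑ G : Fin n → Fin n → Bool,
          (if 0 < X G then Real.sqrt (wt n p G) else 0) ^ 2) = A := by
        rw [hA, Finset.sum_filter]
        refine Finset.sum_congr rfl fun G _ => ?_
        split
        · exact Real.sq_sqrt (wt_nonneg hp0.le hp1 G)
        · exact zero_pow two_ne_zero
      rw [e1eq, e2eq, aeq] at h
      exact h
    have hAJ : A ≤ ∑ G ∈ J, wt n p G := by
      apply Finset.sum_le_sum_of_subset_of_nonneg
      · intro G hG
        rw [Finset.mem_filter] at hG
        have hpos : 0 < (Φ.filter
            (fun φ => ∀ x ∈ edgePos T φ, G x.1 x.2 = true)).card := by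
          have hpos' := hG.2
          rw [hX] at hpos'
          dsimp only at hpos'
          exact_mod_cast hpos'
        obtain ⟨φ, hφm⟩ := Finset.card_pos.1 hpos
        rw [Finset.mem_filter] at hφm
        obtain ⟨hφΦ, hcyl⟩ := hφm
        obtain ⟨hinj, hleL, hmemR⟩ := hΦmem φ hφΦ
        rw [hJdef, Finset.mem_filter]
        refine ⟨Finset.mem_univ _, ?_⟩
        refine ⟨φ, hinj, hleL, ?_, (mem_cyl_iff T hinj G).1 hcyl⟩
        intro v hv
        refine ⟨hmemR v hv, ?_⟩
        intro i hvi
        have hveq : φ v = φ (le i) := by rw [hleL i]; exact hvi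
        have hvle : v = le i := hinj hveq
        exact hv (by rw [hvle]; exact leaf_le hleRange i)
      · intro G _ _
        exact wt_nonneg hp0.le hp1 G
    -- lower bound on the number of embeddings
    have hΦlb : ((η/2) * n) ^ χ ≤ (Φ.card : ℝ) := by
      set r := Fintype.card {x : Fin n // x ∈ R ∧ x ∉ Set.range L} with hr
      have h4 : (R.ncard : ℝ) ≤ (r:ℝ) + ξ := by
        exact_mod_cast R_card_lb (L := L) (R := R) hL
      have h5 : η * n - ξ ≤ (r:ℝ) := by linarith [hRcard]
      have hχr : χ ≤ r := by
        have : (χ:ℝ) ≤ (r:ℝ) := by linarith [h2]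
        exact_mod_cast this
      have h6 : (η/2) * n ≤ ((r + 1 - χ : ℕ) : ℝ) := by
        rw [Nat.cast_sub (by omega)]
        push_cast
        linarith [h2]
      calc ((η/2) * n) ^ χ ≤ (((r + 1 - χ : ℕ)) : ℝ) ^ χ := by
            apply pow_le_pow_left₀ (by positivity) h6
        _ = (((r + 1 - χ) ^ χ : ℕ) : ℝ) := by push_cast; ring
        _ ≤ ((r.descFactorial χ : ℕ) : ℝ) := by
            exact_mod_cast descFactorial_ge r χ
        _ ≤ (Φ.card : ℝ) := by
            have h7 := lower_card (L := L) (R := R) hle hleRange hL hLR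
            rw [← hχf, hχfχ] at h7
            exact_mod_cast h7
    have hΦpos : (0:ℝ) < (Φ.card : ℝ) :=
      lt_of_lt_of_le (pow_pos (mul_pos (by linarith) hn0) χ) hΦlb
    have hΦne : Φ.Nonempty := Finset.card_pos.1 (by exact_mod_cast hΦpos)
    set S2 := ∑ φ ∈ Φ, ∑ ψ ∈ Φ, p ^ ((edgePos T φ ∪ edgePos T ψ).card) with hS2
    have hS2pos : 0 < S2 := by
      rw [hS2]
      exact Finset.sum_pos
        (fun φ _ => Finset.sum_pos (fun ψ _ => pow_pos hp0 _) hΦne) hΦne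
    -- fiberwise bound on S2
    have hfiber : S2 ≤ 2 * (m:ℝ)^χf * ((Φ.card:ℝ) * p ^ ζ) := by
      set cls : (V → Fin n) × (V → Fin n) → Finset V × Finset (Sym2 V) :=
        fun pr => (sFin pr.1 pr.2, tFin T pr.1 pr.2) with hcls
      set tκ : Finset V × Finset (Sym2 V) := ((Finset.univ : Finset V), T.edgeFinset)
        with htκ
      have hstep : S2 = ∑ κ ∈ (Finset.univ : Finset (Finset V × Finset (Sym2 V))),
          ∑ pr ∈ (Φ ×ˢ Φ).filter (fun pr => cls pr = κ),
            p ^ ((edgePos T pr.1 ∪ edgePos T pr.2).card) := by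
        rw [Finset.sum_fiberwise_of_maps_to (fun pr _ => Finset.mem_univ (cls pr)), hS2,
          Finset.sum_product]
      have hκb : ∀ κ : Finset V × Finset (Sym2 V),
          (∑ pr ∈ (Φ ×ˢ Φ).filter (fun pr => cls pr = κ),
            p ^ ((edgePos T pr.1 ∪ edgePos T pr.2).card))
          ≤ (Φ.card:ℝ) * p ^ ζ * (m:ℝ)^χf * (if κ = tκ then (1:ℝ) else 1/(K:ℝ)) := by
        intro κ
        by_cases hemp : ((Φ ×ˢ Φ).filter (fun pr => cls pr = κ)).Nonempty
        · obtain ⟨pr0, hpr0⟩ := hemp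
          rw [Finset.mem_filter, Finset.mem_product] at hpr0
          obtain ⟨⟨hpr0a, hpr0b⟩, hpr0c⟩ := hpr0
          have hκ1 : sFin pr0.1 pr0.2 = κ.1 := congrArg Prod.fst hpr0c
          have hκ2' : tFin T pr0.1 pr0.2 = κ.2 := congrArg Prod.snd hpr0c
          have hκ2 : κ.2 ⊆ T.edgeFinset := hκ2' ▸ tFin_subset T pr0.1 pr0.2
          have hκ2c : κ.2.card ≤ ζ := hζE ▸ Finset.card_le_card hκ2
          have hterm : ∀ pr ∈ (Φ ×ˢ Φ).filter (fun pr => cls pr = κ),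
              p ^ ((edgePos T pr.1 ∪ edgePos T pr.2).card)
                ≤ p ^ ζ * p ^ (ζ - κ.2.card) := by
            intro pr hpr
            rw [Finset.mem_filter, Finset.mem_product] at hpr
            have hiφ := hΦinj _ hpr.1.1
            have hiψ := hΦinj _ hpr.1.2
            have h9 : (edgePos T pr.1).card = ζ := by
              rw [card_edgePos T hiφ, hζE]
            have h10 : (edgePos T pr.2).card = ζ := by
              rw [card_edgePos T hiψ, hζE]
            have hcard : ζ + (ζ - κ.2.card) ≤ (edgePos T pr.1 ∪ edgePos T pr.2).card := by
              have h7 := Finset.card_union_add_card_inter (edgePos T pr.1) (edgePos T pr.2)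
              have h8 : (edgePos T pr.1 ∩ edgePos T pr.2).card ≤ κ.2.card := by
                have h8' := card_inter_le T pr.1 pr.2
                rw [show tFin T pr.1 pr.2 = κ.2 from congrArg Prod.snd hpr.2] at h8'
                exact h8'
              omega
            rw [← pow_add]
            exact pow_le_pow_of_le_one hp0.le hp1 hcard
          have hcount : (((Φ ×ˢ Φ).filter (fun pr => cls pr = κ)).card : ℝ)
              ≤ (Φ.card:ℝ) * ((m:ℝ)^χf * (n:ℝ) ^ ((Finset.univ \ κ.1).card)) := by
            have hN : ((Φ ×ˢ Φ).filter (fun pr => cls pr = κ)).card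
                ≤ Φ.card * (m ^ χf * n ^ ((Finset.univ \ κ.1).card)) := by
              have hsplit : ((Φ ×ˢ Φ).filter (fun pr => cls pr = κ)).card
                  = ∑ φ ∈ Φ, (Φ.filter (fun ψ => cls (φ, ψ) = κ)).card := by
                rw [Finset.card_filter, Finset.sum_product]
                exact Finset.sum_congr rfl fun φ _ => (Finset.card_filter _ _).symm
              rw [hsplit]
              calc ∑ φ ∈ Φ, (Φ.filter (fun ψ => cls (φ, ψ) = κ)).card
                  ≤ ∑ φ ∈ Φ, m ^ χf * n ^ ((Finset.univ \ κ.1).card) := by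
                    apply Finset.sum_le_sum
                    intro φ hφ
                    have hsub2 : Φ.filter (fun ψ => cls (φ, ψ) = κ)
                        ⊆ (embF T le L R).filter
                            (fun ψ => (sFin φ ψ, tFin T φ ψ) = κ) := by
                      intro ψ hψ
                      rw [Finset.mem_filter] at hψ ⊢
                      exact ⟨hψ.1, hψ.2⟩
                    calc (Φ.filter (fun ψ => cls (φ, ψ) = κ)).card
                        ≤ ((embF T le L R).filter
                            (fun ψ => (sFin φ ψ, tFin T φ ψ) = κ)).card :=
                          Finset.card_le_card hsub2
                      _ ≤ m ^ χf * n ^ ((Finset.univ \ κ.1).card) := by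
                          rw [hχf]
                          exact fiber_card hle hleRange hm1 h1 (hΦinj φ hφ) κ
                  _ = Φ.card * (m ^ χf * n ^ ((Finset.univ \ κ.1).card)) := by
                    rw [Finset.sum_const, smul_eq_mul]
            calc (((Φ ×ˢ Φ).filter (fun pr => cls pr = κ)).card : ℝ)
                ≤ ((Φ.card * (m ^ χf * n ^ ((Finset.univ \ κ.1).card)) : ℕ) : ℝ) := by
                  exact_mod_cast hN
              _ = (Φ.card:ℝ) * ((m:ℝ)^χf * (n:ℝ) ^ ((Finset.univ \ κ.1).card)) := by
                  push_cast; ring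
          have hmain : (∑ pr ∈ (Φ ×ˢ Φ).filter (fun pr => cls pr = κ),
              p ^ ((edgePos T pr.1 ∪ edgePos T pr.2).card))
              ≤ (Φ.card:ℝ) * p ^ ζ * (m:ℝ)^χf
                  * ((n:ℝ) ^ ((Finset.univ \ κ.1).card) * p ^ (ζ - κ.2.card)) := by
            calc (∑ pr ∈ (Φ ×ˢ Φ).filter (fun pr => cls pr = κ),
                p ^ ((edgePos T pr.1 ∪ edgePos T pr.2).card))
                ≤ ∑ _pr ∈ (Φ ×ˢ Φ).filter (fun pr => cls pr = κ),
                    (p ^ ζ * p ^ (ζ - κ.2.card)) := Finset.sum_le_sum hterm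
              _ = (((Φ ×ˢ Φ).filter (fun pr => cls pr = κ)).card : ℝ)
                    * (p ^ ζ * p ^ (ζ - κ.2.card)) := by
                  rw [Finset.sum_const, nsmul_eq_mul]
              _ ≤ ((Φ.card:ℝ) * ((m:ℝ)^χf * (n:ℝ) ^ ((Finset.univ \ κ.1).card)))
                    * (p ^ ζ * p ^ (ζ - κ.2.card)) := by
                  apply mul_le_mul_of_nonneg_right hcount (by positivity)
              _ = (Φ.card:ℝ) * p ^ ζ * (m:ℝ)^χf
                    * ((n:ℝ) ^ ((Finset.univ \ κ.1).card) * p ^ (ζ - κ.2.card)) := by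
                  ring
          refine hmain.trans ?_
          by_cases hκtop : κ = tκ
          · rw [if_pos hκtop, hκtop, htκ]
            have hz1 : ((Finset.univ \ (Finset.univ : Finset V)).card) = 0 := by
              rw [Finset.sdiff_self, Finset.card_empty]
            have hz2 : ζ - T.edgeFinset.card = 0 := by rw [hζE]; exact Nat.sub_self ζ
            rw [hz1, hz2, pow_zero, pow_zero, mul_one]
          · rw [if_neg hκtop]
            have hbalnum : ((Finset.univ \ κ.1).card : ℝ)
                < α' * ((ζ:ℝ) - κ.2.card) := by
              have hb := balance_apply (α' := α') (ζ := ζ) hbal hleRange hζE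
                (hΦmem _ hpr0a).2.1 (hΦmem _ hpr0b).2.1
                (by rw [show (sFin pr0.1 pr0.2, tFin T pr0.1 pr0.2) = κ from hpr0c]
                    exact hκtop)
              rwa [hκ1, hκ2'] at hb
            have h3κ := h3 κ ⟨hκ2c, hbalnum⟩
            apply mul_le_mul_of_nonneg_left _ (mul_nonneg (mul_nonneg (Nat.cast_nonneg _)
              (pow_nonneg hp0.le _)) (pow_nonneg (Nat.cast_nonneg _) _))
            exact h3κ
        · rw [Finset.not_nonempty_iff_eq_empty.1 hemp, Finset.sum_empty]
          apply mul_nonneg (by positivity)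
          split
          · exact zero_le_one
          · positivity
      calc S2 = _ := hstep
        _ ≤ ∑ κ ∈ (Finset.univ : Finset (Finset V × Finset (Sym2 V))),
              (Φ.card:ℝ) * p ^ ζ * (m:ℝ)^χf * (if κ = tκ then (1:ℝ) else 1/(K:ℝ)) :=
            Finset.sum_le_sum fun κ _ => hκb κ
        _ = (Φ.card:ℝ) * p ^ ζ * (m:ℝ)^χf
              * ∑ κ ∈ (Finset.univ : Finset (Finset V × Finset (Sym2 V))),
                  (if κ = tκ then (1:ℝ) else 1/(K:ℝ)) := by rw [← Finset.mul_sum]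
        _ ≤ (Φ.card:ℝ) * p ^ ζ * (m:ℝ)^χf * 2 := by
            apply mul_le_mul_of_nonneg_left _ (by positivity)
            have hsum : (∑ κ ∈ (Finset.univ : Finset (Finset V × Finset (Sym2 V))),
                (if κ = tκ then (1:ℝ) else 1/K))
                = (∑ κ ∈ (Finset.univ : Finset (Finset V × Finset (Sym2 V))).erase tκ,
                    (if κ = tκ then (1:ℝ) else 1/K)) + 1 := by
              rw [← Finset.sum_erase_add _ _ (Finset.mem_univ tκ), if_pos rfl]
            rw [hsum]
            have herase : (∑ κ ∈ (Finset.univ : Finset (Finset V × Finset (Sym2 V))).erase tκ,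
                (if κ = tκ then (1:ℝ) else 1/K)) ≤ 1 := by
              calc (∑ κ ∈ (Finset.univ : Finset (Finset V × Finset (Sym2 V))).erase tκ,
                  (if κ = tκ then (1:ℝ) else 1/K))
                  = ∑ κ ∈ (Finset.univ : Finset (Finset V × Finset (Sym2 V))).erase tκ,
                      (1/K : ℝ) := by
                    refine Finset.sum_congr rfl fun κ hκ => ?_
                    rw [if_neg (Finset.ne_of_mem_erase hκ)]
                _ = (((Finset.univ : Finset (Finset V × Finset (Sym2 V))).erase tκ).card : ℝ)
                      * (1/K) := by rw [Finset.sum_const, nsmul_eq_mul]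
                _ ≤ (K:ℝ) * (1/K) := by
                    apply mul_le_mul_of_nonneg_right _ (by positivity)
                    have : ((Finset.univ : Finset (Finset V × Finset (Sym2 V))).erase tκ).card
                        ≤ K := by
                      rw [hK, ← Finset.card_univ]
                      exact Finset.card_le_card (Finset.erase_subset _ _)
                    exact_mod_cast this
                _ = 1 := by field_simp
            linarith
        _ = 2 * (m:ℝ)^χf * ((Φ.card:ℝ) * p ^ ζ) := by ring
    -- final algebra
    have h2m : (0:ℝ) < 2 * (m:ℝ)^χf := by positivity
    have hAe : ((Φ.card:ℝ) * p ^ ζ) ^ 2 / S2 ≤ A := by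
      rw [div_le_iff₀ hS2pos]
      calc ((Φ.card:ℝ) * p ^ ζ) ^ 2
          = (∑ G : Fin n → Fin n → Bool, wt n p G * X G) ^ 2 := by rw [he1]
        _ ≤ A * (∑ G : Fin n → Fin n → Bool, wt n p G * X G ^ 2) := hCS
        _ = A * S2 := by rw [he2, hS2]
    have he1pos : (0:ℝ) < (Φ.card:ℝ) * p ^ ζ := mul_pos hΦpos (pow_pos hp0 ζ)
    have hq : ((Φ.card:ℝ) * p ^ ζ) / (2 * (m:ℝ)^χf) ≤ ((Φ.card:ℝ) * p ^ ζ) ^ 2 / S2 := by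
      rw [div_le_div_iff₀ h2m hS2pos]
      calc ((Φ.card:ℝ) * p ^ ζ) * S2
          ≤ ((Φ.card:ℝ) * p ^ ζ) * (2 * (m:ℝ)^χf * ((Φ.card:ℝ) * p ^ ζ)) := by
            exact mul_le_mul_of_nonneg_left hfiber he1pos.le
        _ = ((Φ.card:ℝ) * p ^ ζ) ^ 2 * (2 * (m:ℝ)^χf) := by ring
    have hlast : (η/2)^χ / (2 * (m:ℝ)^χ) * ((n:ℝ) ^ χ * p ^ ζ)
        ≤ ((Φ.card:ℝ) * p ^ ζ) / (2 * (m:ℝ)^χf) := by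
      rw [hχfχ]
      rw [div_mul_eq_mul_div]
      apply div_le_div_of_nonneg_right ?_ (by positivity)
      calc (η/2)^χ * ((n:ℝ) ^ χ * p ^ ζ) = ((η/2) * n) ^ χ * p ^ ζ := by
            rw [mul_pow]; ring
        _ ≤ (Φ.card:ℝ) * p ^ ζ :=
            mul_le_mul_of_nonneg_right hΦlb (pow_nonneg hp0.le ζ)
    calc (η/2)^χ / (2 * (m:ℝ)^χ) * ((n:ℝ) ^ χ * p ^ ζ)
        ≤ ((Φ.card:ℝ) * p ^ ζ) / (2 * (m:ℝ)^χf) := hlast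
      _ ≤ ((Φ.card:ℝ) * p ^ ζ) ^ 2 / S2 := hq
      _ ≤ A := hAe
      _ ≤ ∑ G ∈ J, wt n p G := hAJ
  constructor
  · rw [hμ]
    exact ENNReal.ofReal_le_ofReal hlower
  · rw [hμ]
    apply ENNReal.ofReal_le_ofReal
    rw [one_mul]
    exact hupper
end

section
/- Let α' ∈ (1/2, 1) and let 𝐓 be an α'-balanced tree as in the context with ξ leaves, χ non-leaf vertices and ζ edges. Let 𝐑 be a nonempty subset of the leaf set 𝐋, and let Cap(F_𝐑) denote the minimum of Cap(F) = |V(F)∩𝐐| − α'·|E(F)| over all nonempty subgraphs F of 𝐓 with V(F)∩𝐋 = 𝐑. Consider G = G(n, p) with p = n^{−α'}. Then there is a constant C depending only on α' and 𝐓 such that, for all n, for every subset R ⊂ [n] and every pair of ordered ξ-tuples L = (t_1,…,t_ξ) and L' = (t'_1,…,t'_ξ) of distinct vertices of [n], each with coordinates avoiding R, such that {i : t'_i is a coordinate of L} equals exactly the set of positions of the leaves of 𝐑 in the fixed ordering of 𝐋, one has P[L ⋈_G R and L' ⋈_G R] ≤ C · (n^χ p^ζ)² · n^{−Cap(F_𝐑)}.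 -/
open MeasureTheory Filter

/-- `Cap(F) = |V(F) ∩ 𝐐| − α'·|E(F)|` for a subgraph `F` of the tree `T`. -/
noncomputable def capOf {V : Type*} (α' : ℝ) (T : SimpleGraph V) (F : T.Subgraph) : ℝ :=
  ((F.verts ∩ {v | ¬ IsLeaf T v}).ncard : ℝ) - α' * (F.edgeSet.ncard : ℝ)

/-! ### Auxiliary material for `stmt7` -/

instance (p : ℝ) : IsFiniteMeasure (bernoulliBool p) := by
  constructor; simp [bernoulliBool]

lemma bb_true (p : ℝ) : bernoulliBool p {true} = ENNReal.ofReal p := by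
  simp [bernoulliBool]

lemma bb_univ (p : ℝ) (h0 : 0 ≤ p) (h1 : p ≤ 1) : bernoulliBool p Set.univ = 1 := by
  simp [bernoulliBool]
  rw [← ENNReal.ofReal_add h0 (by linarith)]
  norm_num

lemma edge_event_measure (n : ℕ) (p : ℝ) (h0 : 0 ≤ p) (h1 : p ≤ 1)
    (E : Finset (Fin n × Fin n)) :
    erMeasure n p {G | ∀ e ∈ E, G e.1 e.2 = true} = ENNReal.ofReal p ^ E.card := by
  classical
  have hset : {G : Fin n → Fin n → Bool | ∀ e ∈ E, G e.1 e.2 = true} =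
      Set.pi Set.univ (fun i => Set.pi Set.univ
        (fun j => if (i, j) ∈ E then {true} else Set.univ)) := by
    ext G
    simp only [Set.mem_setOf_eq, Set.mem_pi, Set.mem_univ, forall_true_left]
    constructor
    · intro h i j
      split_ifs with he
      · exact h (i, j) he
      · trivial
    · intro h e he
      have := h e.1 e.2
      rw [if_pos he] at this
      exact this
  rw [hset, erMeasure]
  rw [Measure.pi_pi]
  have hinner : ∀ i : Fin n, (Measure.pi fun _ : Fin n => bernoulliBool p)
      (Set.pi Set.univ (fun j => if (i, j) ∈ E then {true} else Set.univ)) =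
      ∏ j : Fin n, (if (i, j) ∈ E then ENNReal.ofReal p else 1) := by
    intro i
    rw [Measure.pi_pi]
    congr 1; ext j
    split_ifs
    · exact bb_true p
    · exact bb_univ p h0 h1
  simp_rw [hinner]
  rw [← Finset.prod_product']
  rw [Finset.univ_product_univ]
  have : ∀ x : Fin n × Fin n, ((x.1, x.2) ∈ E) = (x ∈ E) := fun x => by rw [Prod.mk.eta]
  simp_rw [this]
  rw [Finset.prod_ite, Finset.prod_const, Finset.prod_const, one_pow, mul_one,
    Finset.filter_univ_mem]

def pairFn {n : ℕ} : Sym2 (Fin n) → Fin n × Fin n :=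
  Sym2.lift ⟨fun i j => (i ⊓ j, i ⊔ j), fun i j => by simp [inf_comm, sup_comm]⟩

lemma pairFn_injective {n : ℕ} : Function.Injective (pairFn (n := n)) := by
  intro a b
  induction a using Sym2.ind with
  | _ i j =>
  induction b using Sym2.ind with
  | _ k l =>
  intro h
  simp only [pairFn, Sym2.lift_mk, Prod.mk.injEq] at h
  rw [Sym2.eq_iff]
  rcases le_total i j with hij | hij <;> rcases le_total k l with hkl | hkl
  · rw [inf_eq_left.2 hij, sup_eq_right.2 hij, inf_eq_left.2 hkl, sup_eq_right.2 hkl] at h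
    exact Or.inl ⟨h.1, h.2⟩
  · rw [inf_eq_left.2 hij, sup_eq_right.2 hij, inf_eq_right.2 hkl, sup_eq_left.2 hkl] at h
    exact Or.inr ⟨h.1, h.2⟩
  · rw [inf_eq_right.2 hij, sup_eq_left.2 hij, inf_eq_left.2 hkl, sup_eq_right.2 hkl] at h
    exact Or.inr ⟨h.2, h.1⟩
  · rw [inf_eq_right.2 hij, sup_eq_left.2 hij, inf_eq_right.2 hkl, sup_eq_left.2 hkl] at h
    exact Or.inl ⟨h.2, h.1⟩

lemma edgePresent_inf_sup {n : ℕ} {G : Fin n → Fin n → Bool} {x y : Fin n}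
    (h : edgePresent G x y) : G (x ⊓ y) (x ⊔ y) = true := by
  rcases h with ⟨h, hg⟩ | ⟨h, hg⟩
  · rwa [inf_eq_left.2 h.le, sup_eq_right.2 h.le]
  · rwa [inf_eq_right.2 h.le, sup_eq_left.2 h.le]

/-- The "intersection pattern" subgraph of `T`. -/
def interF {V : Type} (T : SimpleGraph V) {n : ℕ} (φ φ' : V → Fin n) : T.Subgraph where
  verts := {v | φ' v ∈ Set.range φ}
  Adj u v := T.Adj u v ∧ Sym2.map φ' s(u, v) ∈ Sym2.map φ '' T.edgeSet
  adj_sub h := h.1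
  edge_vert := by
    rintro u v ⟨hadj, e, he, hmap⟩
    induction e using Sym2.ind with
    | _ a b =>
    rw [Sym2.map_pair_eq, Sym2.map_pair_eq, Sym2.eq_iff] at hmap
    rcases hmap with ⟨h1, h2⟩ | ⟨h1, h2⟩
    · exact ⟨a, h1⟩
    · exact ⟨b, h2⟩
  symm := by
    constructor
    rintro u v ⟨hadj, hmem⟩
    refine ⟨hadj.symm, ?_⟩
    rwa [Sym2.map_pair_eq, Sym2.eq_swap, ← Sym2.map_pair_eq]

lemma mem_edgeSet_interF {V : Type} (T : SimpleGraph V) {n : ℕ} (φ φ' : V → Fin n)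
    (e : Sym2 V) :
    e ∈ (interF T φ φ').edgeSet ↔ e ∈ T.edgeSet ∧ Sym2.map φ' e ∈ Sym2.map φ '' T.edgeSet := by
  induction e using Sym2.ind with
  | _ u v =>
  rw [SimpleGraph.Subgraph.mem_edgeSet, SimpleGraph.mem_edgeSet]
  rfl

lemma prod_ite_pred_card {α β : Type*} [Fintype α] [CommMonoid β]
    (P : α → Prop) [DecidablePred P] (a : β) :
    (∏ x : α, if P x then a else 1) = a ^ (Finset.univ.filter P).card := by
  rw [Finset.prod_ite, Finset.prod_const, Finset.prod_const, one_pow, mul_one]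

lemma sum_pow_count {ι : Type*} [Fintype ι] [DecidableEq ι] {n : ℕ} (Rφ : Finset (Fin n))
    (m : ℕ) (hm : Rφ.card ≤ m) :
    ∑ q : ι → Fin n, (n : ℝ) ^ ((Finset.univ.filter (fun v => q v ∈ Rφ)).card) ≤
      (((m : ℝ) + 1) * n) ^ (Fintype.card ι) := by
  have h1 : ∀ q : ι → Fin n, (n : ℝ) ^ ((Finset.univ.filter (fun v => q v ∈ Rφ)).card) =
      ∏ v : ι, (if q v ∈ Rφ then (n : ℝ) else 1) := fun q =>
    (prod_ite_pred_card _ _).symm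
  simp_rw [h1]
  rw [← Fintype.prod_sum (fun (_ : ι) (x : Fin n) => if x ∈ Rφ then (n : ℝ) else 1)]
  have h2 : (∑ x : Fin n, if x ∈ Rφ then (n : ℝ) else 1) ≤ ((m : ℝ) + 1) * n := by
    rw [Finset.sum_ite, Finset.sum_const, Finset.sum_const, Finset.filter_univ_mem]
    have hc : ((Finset.univ.filter (fun x : Fin n => x ∉ Rφ)).card : ℝ) ≤ n := by
      exact_mod_cast (Finset.card_le_univ _).trans_eq (Finset.card_fin n)
    have hm' : (Rφ.card : ℝ) ≤ m := by exact_mod_cast hm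
    have hn0 : (0:ℝ) ≤ n := by positivity
    simp only [nsmul_eq_mul, mul_one]
    nlinarith [hc, hm', hn0]
  calc ∏ _v : ι, (∑ x : Fin n, if x ∈ Rφ then (n : ℝ) else 1)
      ≤ ∏ _v : ι, ((m : ℝ) + 1) * n := by
        apply Finset.prod_le_prod
        · intro v _
          apply Finset.sum_nonneg
          intro x _
          split_ifs <;> positivity
        · intro v _; exact h2
    _ = (((m : ℝ) + 1) * n) ^ (Fintype.card ι) := by
        rw [Finset.prod_const, Finset.card_univ]

open Classical in
noncomputable def extMap {V : Type} {ξ n : ℕ} (T : SimpleGraph V) (le : Fin ξ → V)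
    (hleRange : Set.range le = {v | IsLeaf T v}) (L : Fin ξ → Fin n)
    (q : {v : V // ¬ IsLeaf T v} → Fin n) : V → Fin n := fun v =>
  if h : ∃ i, le i = v then L h.choose
  else q ⟨v, fun hl => h (by
    have : v ∈ Set.range le := by rw [hleRange]; exact hl
    exact this)⟩

lemma extMap_leaf {V : Type} {ξ n : ℕ} (T : SimpleGraph V) (le : Fin ξ → V)
    (hle : Function.Injective le)
    (hleRange : Set.range le = {v | IsLeaf T v}) (L : Fin ξ → Fin n)
    (q : {v : V // ¬ IsLeaf T v} → Fin n) (i : Fin ξ) :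
    extMap T le hleRange L q (le i) = L i := by
  have h : ∃ j, le j = le i := ⟨i, rfl⟩
  rw [extMap, dif_pos h, hle h.choose_spec]

lemma extMap_nonleaf {V : Type} {ξ n : ℕ} (T : SimpleGraph V) (le : Fin ξ → V)
    (hleRange : Set.range le = {v | IsLeaf T v}) (L : Fin ξ → Fin n)
    (q : {v : V // ¬ IsLeaf T v} → Fin n) (v : V) (h : ¬ IsLeaf T v) :
    extMap T le hleRange L q v = q ⟨v, h⟩ := by
  have h' : ¬ ∃ i, le i = v := by
    intro ⟨i, hi⟩
    have : v ∈ Set.range le := ⟨i, hi⟩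
    rw [hleRange] at this
    exact h this
  rw [extMap, dif_neg h']

/-- The body of the existential in `JoinsSet`, for a fixed map `φ`. -/
def Wcond {V : Type} (T : SimpleGraph V) {ξ n : ℕ} (le : Fin ξ → V) (φ : V → Fin n)
    (L : Fin ξ → Fin n) (R : Set (Fin n)) (G : Fin n → Fin n → Bool) : Prop :=
  Function.Injective φ ∧ (∀ i, φ (le i) = L i) ∧
    (∀ v : V, ¬ IsLeaf T v → φ v ∈ R ∧ ∀ i, φ v ≠ L i) ∧
    (∀ u v : V, T.Adj u v → edgePresent G (φ u) (φ v))

lemma interF_leaves {V : Type} (T : SimpleGraph V) {ξ n : ℕ} (le : Fin ξ → V)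
    (hleRange : Set.range le = {v | IsLeaf T v}) (RT : Set V)
    (hRT : RT ⊆ {v | IsLeaf T v}) (R : Set (Fin n)) (L L' : Fin ξ → Fin n)
    (hL'R : ∀ i, L' i ∉ R)
    (hLL' : {i : Fin ξ | ∃ j, L' i = L j} = {i : Fin ξ | le i ∈ RT})
    (φ φ' : V → Fin n)
    (hφle : ∀ i, φ (le i) = L i) (hφQ : ∀ v, ¬ IsLeaf T v → φ v ∈ R)
    (hφ'le : ∀ i, φ' (le i) = L' i) :
    (interF T φ φ').verts ∩ {v | IsLeaf T v} = RT := by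
  ext v
  constructor
  · rintro ⟨⟨w, hw⟩, hleaf⟩
    have hv : v ∈ Set.range le := by rw [hleRange]; exact hleaf
    obtain ⟨i, rfl⟩ := hv
    by_cases hwl : IsLeaf T w
    · have hw' : w ∈ Set.range le := by rw [hleRange]; exact hwl
      obtain ⟨j, rfl⟩ := hw'
      have hij : L' i = L j := by rw [← hφle j, ← hφ'le i, hw]
      have : i ∈ {i : Fin ξ | ∃ j, L' i = L j} := ⟨j, hij⟩
      rw [hLL'] at this
      exact this
    · exfalso
      have h1 : φ w ∈ R := hφQ w hwl
      rw [hw, hφ'le i] at h1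
      exact hL'R i h1
  · intro hv
    have hleaf : IsLeaf T v := hRT hv
    have hv' : v ∈ Set.range le := by rw [hleRange]; exact hleaf
    obtain ⟨i, rfl⟩ := hv'
    have : i ∈ {i : Fin ξ | le i ∈ RT} := hv
    rw [← hLL'] at this
    obtain ⟨j, hj⟩ := this
    exact ⟨⟨le j, by rw [hφle j, hφ'le i, hj]⟩, hleaf⟩

lemma capSet_bdd {V : Type} [Fintype V] (α' : ℝ) (hα0 : 0 ≤ α') (T : SimpleGraph V)
    (ζ : ℕ) (hζ : T.edgeSet.ncard = ζ) (RT : Set V) :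
    BddBelow {x : ℝ | ∃ F : T.Subgraph, F.verts.Nonempty ∧
      F.verts ∩ {v | IsLeaf T v} = RT ∧ x = capOf α' T F} := by
  refine ⟨-(α' * ζ), ?_⟩
  rintro x ⟨F, -, -, rfl⟩
  rw [capOf]
  have h1 : (F.edgeSet.ncard : ℝ) ≤ (ζ : ℝ) := by
    exact_mod_cast hζ ▸ Set.ncard_le_ncard F.edgeSet_subset (Set.toFinite _)
  have h2 : (0:ℝ) ≤ ((F.verts ∩ {v | ¬ IsLeaf T v}).ncard : ℝ) := Nat.cast_nonneg _
  nlinarith [mul_le_mul_of_nonneg_left h1 hα0]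

lemma pair_bound {V : Type} [Fintype V] (α' : ℝ) (hα0 : 0 < α')
    (T : SimpleGraph V) {ξ ζ : ℕ} (le : Fin ξ → V)
    (hleRange : Set.range le = {v | IsLeaf T v})
    (hζ : T.edgeSet.ncard = ζ)
    (RT : Set V) (hRT : RT ⊆ {v | IsLeaf T v}) (hRTne : RT.Nonempty)
    {n : ℕ} (hn : 1 ≤ n) (R : Set (Fin n)) (L L' : Fin ξ → Fin n)
    (hL'R : ∀ i, L' i ∉ R)
    (hLL' : {i : Fin ξ | ∃ j, L' i = L j} = {i : Fin ξ | le i ∈ RT})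
    (φ φ' : V → Fin n) :
    erMeasure n ((n : ℝ) ^ (-α'))
        {G | Wcond T le φ L R G ∧ Wcond T le φ' L' R G} ≤
      ENNReal.ofReal (((n : ℝ) ^ (-α')) ^ (2 * ζ) *
        (n : ℝ) ^ (({v | φ' v ∈ Set.range φ} ∩ {v | ¬ IsLeaf T v}).ncard) *
        (n : ℝ) ^ (-sInf {x : ℝ | ∃ F : T.Subgraph, F.verts.Nonempty ∧
          F.verts ∩ {v | IsLeaf T v} = RT ∧ x = capOf α' T F})) := by
  classical
  set pr : ℝ := (n : ℝ) ^ (-α') with hpr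
  have hn1 : (1 : ℝ) ≤ n := by exact_mod_cast hn
  have hn0 : (0 : ℝ) < n := by linarith
  have hpr0 : 0 ≤ pr := Real.rpow_nonneg hn0.le _
  have hpr1 : pr ≤ 1 := Real.rpow_le_one_of_one_le_of_nonpos hn1 (by linarith)
  rcases Set.eq_empty_or_nonempty
      {G | Wcond T le φ L R G ∧ Wcond T le φ' L' R G} with hemp | ⟨G₀, hG₀⟩
  · rw [hemp, measure_empty]; exact zero_le
  obtain ⟨⟨hφinj, hφle, hφQ, -⟩, ⟨hφ'inj, hφ'le, hφ'Q, -⟩⟩ := hG₀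
  set E1 : Set (Sym2 (Fin n)) := Sym2.map φ '' T.edgeSet with hE1
  set E2 : Set (Sym2 (Fin n)) := Sym2.map φ' '' T.edgeSet with hE2
  set EF : Finset (Fin n × Fin n) := ((E1 ∪ E2).toFinite.toFinset).image pairFn with hEF
  have hsub : {G | Wcond T le φ L R G ∧ Wcond T le φ' L' R G} ⊆
      {G | ∀ e ∈ EF, G e.1 e.2 = true} := by
    rintro G ⟨hW, hW'⟩ e he
    simp only [hEF, Finset.mem_image, Set.Finite.mem_toFinset] at he
    obtain ⟨a, ha, rfl⟩ := he
    rcases ha with ⟨b, hb, rfl⟩ | ⟨b, hb, rfl⟩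
    · induction b using Sym2.ind with
      | _ u v =>
      have hep := hW.2.2.2 u v hb
      rw [Sym2.map_pair_eq]
      exact edgePresent_inf_sup hep
    · induction b using Sym2.ind with
      | _ u v =>
      have hep := hW'.2.2.2 u v hb
      rw [Sym2.map_pair_eq]
      exact edgePresent_inf_sup hep
  refine le_trans (measure_mono hsub) ?_
  rw [edge_event_measure n pr hpr0 hpr1 EF, ← ENNReal.ofReal_pow hpr0]
  apply ENNReal.ofReal_le_ofReal
  have hE1card : E1.ncard = ζ := by
    rw [hE1, Set.ncard_image_of_injective _ (Sym2.map.injective hφinj), hζ]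
  have hE2card : E2.ncard = ζ := by
    rw [hE2, Set.ncard_image_of_injective _ (Sym2.map.injective hφ'inj), hζ]
  have hEFcard : EF.card = (E1 ∪ E2).ncard := by
    rw [hEF, Finset.card_image_of_injective _ pairFn_injective,
      ← Set.ncard_eq_toFinset_card _ ((E1 ∪ E2).toFinite)]
  have hsum : (E1 ∪ E2).ncard + (E1 ∩ E2).ncard = 2 * ζ := by
    rw [Set.ncard_union_add_ncard_inter E1 E2 (Set.toFinite _) (Set.toFinite _),
      hE1card, hE2card]; ring
  set F : T.Subgraph := interF T φ φ' with hF
  set k : ℕ := F.edgeSet.ncard with hk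
  have hik : (E1 ∩ E2).ncard ≤ k := by
    have hsub2 : E1 ∩ E2 ⊆ Sym2.map φ' '' F.edgeSet := by
      rintro e ⟨he1, he2⟩
      rw [hE2] at he2
      obtain ⟨b, hb, rfl⟩ := he2
      exact ⟨b, (mem_edgeSet_interF T φ φ' b).2 ⟨hb, he1⟩, rfl⟩
    exact le_trans (Set.ncard_le_ncard hsub2 (Set.toFinite _))
      (Set.ncard_image_le (Set.toFinite _))
  set cs : Set ℝ := {x : ℝ | ∃ F : T.Subgraph, F.verts.Nonempty ∧
      F.verts ∩ {v | IsLeaf T v} = RT ∧ x = capOf α' T F} with hcs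
  set cnt : ℕ := ({v | φ' v ∈ Set.range φ} ∩ {v | ¬ IsLeaf T v}).ncard with hcnt
  have hverts : F.verts ∩ {v | IsLeaf T v} = RT :=
    interF_leaves T le hleRange RT hRT R L L' hL'R hLL' φ φ' hφle
      (fun v hv => (hφQ v hv).1) hφ'le
  have hFne : F.verts.Nonempty := by
    obtain ⟨v, hv⟩ := hRTne
    have : v ∈ F.verts ∩ {v | IsLeaf T v} := hverts ▸ hv
    exact ⟨v, this.1⟩
  have hmem : capOf α' T F ∈ cs := ⟨F, hFne, hverts, rfl⟩
  have hcap : capOf α' T F = (cnt : ℝ) - α' * (k : ℝ) := rfl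
  have hsInf : sInf cs ≤ (cnt : ℝ) - α' * (k : ℝ) :=
    hcap ▸ csInf_le (capSet_bdd α' hα0.le T ζ hζ RT) hmem
  -- the real chain
  have hprn : pr * (n : ℝ) ^ α' = 1 := by
    rw [hpr, ← Real.rpow_add hn0, neg_add_cancel, Real.rpow_zero]
  have hexp : ((n : ℝ) ^ α') ^ k = (n : ℝ) ^ (α' * (k : ℝ)) := by
    rw [Real.rpow_mul hn0.le, Real.rpow_natCast]
  have hstep : (n : ℝ) ^ (α' * (k : ℝ)) ≤ (n : ℝ) ^ (cnt : ℕ) * (n : ℝ) ^ (-sInf cs) := by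
    have h1 : (n : ℝ) ^ (cnt : ℕ) * (n : ℝ) ^ (-sInf cs) = (n : ℝ) ^ ((cnt : ℝ) - sInf cs) := by
      rw [← Real.rpow_natCast (n : ℝ) cnt, ← Real.rpow_add hn0, sub_eq_add_neg]
    rw [h1]
    exact Real.rpow_le_rpow_of_exponent_le hn1 (by linarith)
  calc pr ^ EF.card
      = pr ^ EF.card * (pr * (n : ℝ) ^ α') ^ k := by rw [hprn, one_pow, mul_one]
    _ = (pr ^ EF.card * pr ^ k) * ((n : ℝ) ^ α') ^ k := by ring
    _ ≤ (pr ^ EF.card * pr ^ (E1 ∩ E2).ncard) * ((n : ℝ) ^ α') ^ k := by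
        apply mul_le_mul_of_nonneg_right _ (pow_nonneg (Real.rpow_nonneg hn0.le _) _)
        exact mul_le_mul_of_nonneg_left (pow_le_pow_of_le_one hpr0 hpr1 hik)
          (pow_nonneg hpr0 _)
    _ = pr ^ (2 * ζ) * ((n : ℝ) ^ α') ^ k := by
        rw [← pow_add, hEFcard, hsum]
    _ ≤ pr ^ (2 * ζ) * ((n : ℝ) ^ (cnt : ℕ) * (n : ℝ) ^ (-sInf cs)) := by
        apply mul_le_mul_of_nonneg_left _ (pow_nonneg hpr0 _)
        rw [hexp]
        exact hstep
    _ = pr ^ (2 * ζ) * (n : ℝ) ^ (cnt : ℕ) * (n : ℝ) ^ (-sInf cs) := by ring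

theorem stmt7 (α' : ℝ) (hα₁ : 1 / 2 < α') (hα₂ : α' < 1)
    (V : Type) [Fintype V] (T : SimpleGraph V) (hT : T.IsTree)
    (ξ χ ζ : ℕ)
    (le : Fin ξ → V) (hle : Function.Injective le)
    (hleRange : Set.range le = {v | IsLeaf T v})
    (hχ : {v : V | ¬ IsLeaf T v}.ncard = χ)
    (hζ : T.edgeSet.ncard = ζ)
    (hbal : BalancedTree α' T)
    (RT : Set V) (hRT : RT ⊆ {v | IsLeaf T v}) (hRTne : RT.Nonempty) :
    ∃ C : ℝ, ∀ (n : ℕ) (R : Set (Fin n)) (L L' : Fin ξ → Fin n),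
      Function.Injective L → Function.Injective L' →
      (∀ i, L i ∉ R) → (∀ i, L' i ∉ R) →
      {i : Fin ξ | ∃ j, L' i = L j} = {i : Fin ξ | le i ∈ RT} →
      erMeasure n ((n : ℝ) ^ (-α'))
          {G | JoinsSet T le G L R ∧ JoinsSet T le G L' R} ≤
        ENNReal.ofReal (C * ((n : ℝ) ^ χ * ((n : ℝ) ^ (-α')) ^ ζ) ^ 2 *
          (n : ℝ) ^
            (-sInf {x : ℝ | ∃ F : T.Subgraph, F.verts.Nonempty ∧
              F.verts ∩ {v | IsLeaf T v} = RT ∧ x = capOf α' T F})) := by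
  classical
  refine ⟨((Fintype.card V : ℝ) + 1) ^ χ, ?_⟩
  intro n R L L' hL hL' hLR hL'R hset
  obtain ⟨v₀, hv₀⟩ := hRTne
  have hv₀leaf : IsLeaf T v₀ := hRT hv₀
  have hv₀r : v₀ ∈ Set.range le := by rw [hleRange]; exact hv₀leaf
  obtain ⟨i₀, -⟩ := hv₀r
  rcases Nat.eq_zero_or_pos n with rfl | hn
  · exact (L i₀).elim0
  set pr : ℝ := (n : ℝ) ^ (-α') with hpr
  set cs : Set ℝ := {x : ℝ | ∃ F : T.Subgraph, F.verts.Nonempty ∧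
      F.verts ∩ {v | IsLeaf T v} = RT ∧ x = capOf α' T F} with hcs
  have hQcard : Fintype.card {v : V // ¬ IsLeaf T v} = χ := by
    rw [← Nat.card_eq_fintype_card]
    show Nat.card ↥{v : V | ¬ IsLeaf T v} = χ
    rw [Nat.card_coe_set_eq, hχ]
  -- covering by a union indexed by the values on non-leaves
  have hcover : {G | JoinsSet T le G L R ∧ JoinsSet T le G L' R} ⊆
      ⋃ qq : ({v : V // ¬ IsLeaf T v} → Fin n) × ({v : V // ¬ IsLeaf T v} → Fin n),
        {G | Wcond T le (extMap T le hleRange L qq.1) L R G ∧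
             Wcond T le (extMap T le hleRange L' qq.2) L' R G} := by
    rintro G ⟨⟨φ, hφ⟩, ⟨φ', hφ'⟩⟩
    have hext : ∀ (M : Fin ξ → Fin n) (ψ : V → Fin n), (∀ i, ψ (le i) = M i) →
        extMap T le hleRange M (fun v => ψ v.1) = ψ := by
      intro M ψ hψ
      funext v
      by_cases h : IsLeaf T v
      · have : v ∈ Set.range le := by rw [hleRange]; exact h
        obtain ⟨i, rfl⟩ := this
        rw [extMap_leaf T le hle hleRange, hψ i]
      · rw [extMap_nonleaf T le hleRange _ _ v h]
    refine Set.mem_iUnion.2 ⟨(fun v => φ v.1, fun v => φ' v.1), ?_, ?_⟩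
    · show Wcond T le (extMap T le hleRange L (fun v => φ v.1)) L R G
      rw [hext L φ hφ.2.1]; exact hφ
    · show Wcond T le (extMap T le hleRange L' (fun v => φ' v.1)) L' R G
      rw [hext L' φ' hφ'.2.1]; exact hφ'
  refine le_trans (measure_mono hcover) ?_
  refine le_trans (measure_iUnion_le _) ?_
  rw [tsum_fintype]
  have hterm : ∀ qq : ({v : V // ¬ IsLeaf T v} → Fin n) × ({v : V // ¬ IsLeaf T v} → Fin n),
      erMeasure n pr {G | Wcond T le (extMap T le hleRange L qq.1) L R G ∧
          Wcond T le (extMap T le hleRange L' qq.2) L' R G} ≤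
        ENNReal.ofReal (pr ^ (2 * ζ) *
          (n : ℝ) ^ (({v | extMap T le hleRange L' qq.2 v ∈
              Set.range (extMap T le hleRange L qq.1)} ∩ {v | ¬ IsLeaf T v}).ncard) *
          (n : ℝ) ^ (-sInf cs)) := fun qq =>
    pair_bound α' (by linarith) T le hleRange hζ RT hRT ⟨v₀, hv₀⟩ hn R L L' hL'R hset _ _
  refine le_trans (Finset.sum_le_sum fun qq _ => hterm qq) ?_
  rw [← ENNReal.ofReal_sum_of_nonneg]; swap
  · intro qq _
    have h1 : (0:ℝ) ≤ pr := Real.rpow_nonneg (Nat.cast_nonneg n) _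
    have h2 : (0:ℝ) ≤ (n : ℝ) ^ (-sInf cs) := Real.rpow_nonneg (Nat.cast_nonneg n) _
    positivity
  apply ENNReal.ofReal_le_ofReal
  -- now a purely real-valued counting estimate
  have hcnt : ∀ (q q' : {v : V // ¬ IsLeaf T v} → Fin n),
      ({v | extMap T le hleRange L' q' v ∈ Set.range (extMap T le hleRange L q)} ∩
        {v | ¬ IsLeaf T v}).ncard =
      (Finset.univ.filter (fun u : {v : V // ¬ IsLeaf T v} =>
        q' u ∈ Finset.univ.image (extMap T le hleRange L q))).card := by
    intro q q'
    set ψ := extMap T le hleRange L q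
    have hSeq : {v | extMap T le hleRange L' q' v ∈ Set.range ψ} ∩ {v | ¬ IsLeaf T v} =
        Subtype.val '' {u : {v : V // ¬ IsLeaf T v} | q' u ∈ Set.range ψ} := by
      ext v
      constructor
      · rintro ⟨hmem, hnl⟩
        refine ⟨⟨v, hnl⟩, ?_, rfl⟩
        show q' ⟨v, hnl⟩ ∈ Set.range ψ
        rwa [← extMap_nonleaf T le hleRange L' q' v hnl]
      · rintro ⟨⟨u, hu⟩, hmem, rfl⟩
        refine ⟨?_, hu⟩
        rwa [Set.mem_setOf_eq, extMap_nonleaf T le hleRange L' q' u hu]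
    rw [hSeq, Set.ncard_image_of_injective _ Subtype.val_injective]
    have h2 : {u : {v : V // ¬ IsLeaf T v} | q' u ∈ Set.range ψ} =
        ↑(Finset.univ.filter (fun u : {v : V // ¬ IsLeaf T v} =>
          q' u ∈ Finset.univ.image ψ)) := by
      ext u
      simp [Set.mem_range, Finset.mem_image]
    rw [h2, Set.ncard_coe_finset]
  simp_rw [hcnt]
  rw [Fintype.sum_prod_type]
  have hinner : ∀ q : {v : V // ¬ IsLeaf T v} → Fin n,
      (∑ q' : {v : V // ¬ IsLeaf T v} → Fin n, pr ^ (2 * ζ) *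
        (n : ℝ) ^ ((Finset.univ.filter (fun u : {v : V // ¬ IsLeaf T v} =>
          q' u ∈ Finset.univ.image (extMap T le hleRange L q))).card) *
        (n : ℝ) ^ (-sInf cs)) ≤
      pr ^ (2 * ζ) * (n : ℝ) ^ (-sInf cs) * (((Fintype.card V : ℝ) + 1) * n) ^ χ := by
    intro q
    have hb := sum_pow_count (ι := {v : V // ¬ IsLeaf T v})
      (Finset.univ.image (extMap T le hleRange L q)) (Fintype.card V)
      ((Finset.card_image_le).trans (Finset.card_univ.le))
    rw [hQcard] at hb
    have hpr0 : (0:ℝ) ≤ pr := Real.rpow_nonneg (Nat.cast_nonneg n) _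
    have hni0 : (0:ℝ) ≤ (n : ℝ) ^ (-sInf cs) := Real.rpow_nonneg (Nat.cast_nonneg n) _
    calc (∑ q' : {v : V // ¬ IsLeaf T v} → Fin n, pr ^ (2 * ζ) *
          (n : ℝ) ^ ((Finset.univ.filter (fun u : {v : V // ¬ IsLeaf T v} =>
            q' u ∈ Finset.univ.image (extMap T le hleRange L q))).card) *
          (n : ℝ) ^ (-sInf cs))
        = pr ^ (2 * ζ) * (n : ℝ) ^ (-sInf cs) *
          ∑ q' : {v : V // ¬ IsLeaf T v} → Fin n,
            (n : ℝ) ^ ((Finset.univ.filter (fun u : {v : V // ¬ IsLeaf T v} =>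
              q' u ∈ Finset.univ.image (extMap T le hleRange L q))).card) := by
          rw [Finset.mul_sum]; congr 1; funext q'; ring
      _ ≤ pr ^ (2 * ζ) * (n : ℝ) ^ (-sInf cs) * (((Fintype.card V : ℝ) + 1) * n) ^ χ := by
          exact mul_le_mul_of_nonneg_left hb (by positivity)
  calc (∑ q : {v : V // ¬ IsLeaf T v} → Fin n,
        ∑ q' : {v : V // ¬ IsLeaf T v} → Fin n, pr ^ (2 * ζ) *
          (n : ℝ) ^ ((Finset.univ.filter (fun u : {v : V // ¬ IsLeaf T v} =>
            q' u ∈ Finset.univ.image (extMap T le hleRange L q))).card) *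
          (n : ℝ) ^ (-sInf cs))
      ≤ ∑ _q : {v : V // ¬ IsLeaf T v} → Fin n,
          pr ^ (2 * ζ) * (n : ℝ) ^ (-sInf cs) * (((Fintype.card V : ℝ) + 1) * n) ^ χ :=
        Finset.sum_le_sum fun q _ => hinner q
    _ = (n : ℝ) ^ χ * (pr ^ (2 * ζ) * (n : ℝ) ^ (-sInf cs) *
          (((Fintype.card V : ℝ) + 1) * n) ^ χ) := by
        rw [Finset.sum_const, Finset.card_univ, Fintype.card_fun, hQcard, Fintype.card_fin,
          nsmul_eq_mul]
        push_cast
        ring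
    _ = ((Fintype.card V : ℝ) + 1) ^ χ * ((n : ℝ) ^ χ * pr ^ ζ) ^ 2 * (n : ℝ) ^ (-sInf cs) := by
        rw [mul_pow, mul_pow]
        ring
end

section
/- Fix α' ∈ (0,1) and a finite graph H with a subset R ⊂ V(H) and a fixed ordering of R, such that (R, H) is a dense pattern with respect to α'. Then there exists a constant κ (depending only on α' and (R,H)) such that, with probability tending to 1 as n → ∞, the Erdős–Rényi random graph G = G(n, n^{−α'}) satisfies: for every ordered |R|-tuple I of distinct vertices of [n], Ext(I; R, H) ≤ κ. -/
open MeasureTheory Filter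

/-- `extCount H re G I` is `Ext(I; R, H)`: the number of subgraphs `H̃` of `G`
(recorded by their vertex set together with their edge set, each edge given by its
ordered pair of endpoints) such that some graph isomorphism from `H` to `H̃` maps the
ordered tuple `R` (enumerated by `re`) coordinatewise to `I`. -/
noncomputable def extCount {V : Type*} (H : SimpleGraph V) {r : ℕ} (re : Fin r → V)
    {n : ℕ} (G : Fin n → Fin n → Bool) (I : Fin r → Fin n) : ℕ :=
  Set.ncard {P : Set (Fin n) × Set (Fin n × Fin n) |
    ∃ φ : V → Fin n, Function.Injective φ ∧ (∀ i, φ (re i) = I i) ∧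
      (∀ u v : V, H.Adj u v → edgePresent G (φ u) (φ v)) ∧
      P.1 = Set.range φ ∧
      P.2 = {e | ∃ u v : V, H.Adj u v ∧ φ u < φ v ∧ e = (φ u, φ v)}}

/-- `(R, H)` is a dense pattern with respect to `α'`. -/
def DensePattern {V : Type*} (α' : ℝ) (H : SimpleGraph V) (R : Set V) : Prop :=
  ∀ H' : H.Subgraph, H' ≠ ⊤ → R ⊆ H'.verts →
    ((Set.univ \ H'.verts).ncard : ℝ) < α' * ((H.edgeSet \ H'.edgeSet).ncard : ℝ)

/-- `(R, H)` is a sparse pattern with respect to `α'`. -/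
def SparsePattern {V : Type*} (α' : ℝ) (H : SimpleGraph V) (R : Set V) : Prop :=
  ∀ H' : H.Subgraph, R ⊆ H'.verts → H'.edgeSet.Nonempty →
    α' * (H'.edgeSet.ncard : ℝ) < ((H'.verts \ R).ncard : ℝ)

open scoped ENNReal

set_option linter.unusedSectionVars false

lemma bernoulliBool_apply_s8 (p : ℝ) (s : Set Bool) :
    bernoulliBool p s = ENNReal.ofReal p * s.indicator 1 true
      + ENNReal.ofReal (1 - p) * s.indicator 1 false := by
  simp [bernoulliBool, Measure.dirac_apply' _ (Set.Finite.measurableSet (Set.toFinite s))]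

lemma bernoulliBool_isProb (p : ℝ) (h0 : 0 ≤ p) (h1 : p ≤ 1) :
    IsProbabilityMeasure (bernoulliBool p) := by
  constructor
  rw [bernoulliBool_apply_s8]
  rw [Set.indicator_of_mem (Set.mem_univ _), Set.indicator_of_mem (Set.mem_univ _)]
  simp only [Pi.one_apply, mul_one]
  rw [← ENNReal.ofReal_add h0 (by linarith)]
  norm_num

lemma bernoulliBool_true (p : ℝ) :
    bernoulliBool p {b | b = true} = ENNReal.ofReal p := by
  rw [bernoulliBool_apply_s8]
  rw [Set.indicator_of_mem (by simp : true ∈ {b | b = true}),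
    Set.indicator_of_notMem (by simp : ¬ false ∈ {b | b = true})]
  simp

lemma erMeasure_isProb (n : ℕ) (p : ℝ) (h0 : 0 ≤ p) (h1 : p ≤ 1) :
    IsProbabilityMeasure (erMeasure n p) := by
  haveI := bernoulliBool_isProb p h0 h1
  exact MeasureTheory.Measure.pi.instIsProbabilityMeasure _

lemma erMeasure_pairs_le (n : ℕ) (p : ℝ) (h0 : 0 ≤ p) (h1 : p ≤ 1)
    (F : Finset (Fin n × Fin n)) :
    erMeasure n p {G | ∀ q ∈ F, G q.1 q.2 = true} ≤ ENNReal.ofReal p ^ F.card := by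
  classical
  haveI := bernoulliBool_isProb p h0 h1
  have hset : {G : Fin n → Fin n → Bool | ∀ q ∈ F, G q.1 q.2 = true}
      = Set.univ.pi (fun i => Set.univ.pi (fun j =>
          if (i, j) ∈ F then {b | b = true} else Set.univ)) := by
    ext G
    simp only [Set.mem_setOf_eq, Set.mem_univ_pi]
    constructor
    · intro h i j
      split_ifs with hq
      · exact h (i, j) hq
      · trivial
    · intro h q hq
      have := h q.1 q.2
      rwa [if_pos hq] at this
  refine le_of_eq ?_
  rw [hset, erMeasure, Measure.pi_pi]
  have hinner : ∀ i : Fin n,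
      (Measure.pi fun _ : Fin n => bernoulliBool p)
        (Set.univ.pi (fun j => if (i, j) ∈ F then {b | b = true} else Set.univ))
      = ENNReal.ofReal p ^ (Finset.univ.filter (fun j => (i, j) ∈ F)).card := by
    intro i
    rw [Measure.pi_pi]
    rw [← Finset.prod_filter_mul_prod_filter_not Finset.univ (fun j => (i, j) ∈ F)]
    have h1' : ∀ j ∈ Finset.univ.filter (fun j => (i, j) ∈ F),
        bernoulliBool p (if (i, j) ∈ F then {b | b = true} else Set.univ)
          = ENNReal.ofReal p := by
      intro j hj
      rw [Finset.mem_filter] at hj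
      rw [if_pos hj.2, bernoulliBool_true]
    have h2' : ∀ j ∈ Finset.univ.filter (fun j => ¬ (i, j) ∈ F),
        bernoulliBool p (if (i, j) ∈ F then {b | b = true} else Set.univ) = 1 := by
      intro j hj
      rw [Finset.mem_filter] at hj
      rw [if_neg hj.2]
      exact measure_univ
    rw [Finset.prod_congr rfl h1', Finset.prod_congr rfl h2']
    simp
  rw [Finset.prod_congr rfl (fun i _ => hinner i), Finset.prod_pow_eq_pow_sum]
  congr 1
  rw [Finset.card_eq_sum_card_fiberwise (f := Prod.fst) (t := Finset.univ)
    (fun q _ => Finset.mem_univ _)]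
  refine Finset.sum_congr rfl (fun i _ => ?_)
  refine Finset.card_bij (fun j _ => (i, j)) ?_ ?_ ?_
  · intro j hj
    simp only [Finset.mem_filter, Finset.mem_univ, true_and] at hj ⊢
    exact ⟨hj, trivial⟩
  · intro j hj j' hj' h
    exact (Prod.mk.injEq _ _ _ _ ▸ h).2
  · intro q hq
    simp only [Finset.mem_filter] at hq
    refine ⟨q.2, ?_, ?_⟩
    · simp only [Finset.mem_filter, Finset.mem_univ, true_and]
      have h2 : (i, q.2) = q := by rw [← hq.2]
      rw [h2]; exact hq.1
    · show (i, q.2) = q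
      rw [← hq.2]

section Comb
variable {V : Type} [Fintype V] {H : SimpleGraph V} {r : ℕ} {re : Fin r → V} {α' : ℝ}

/-- bottom subgraph on the root set -/
def rootSub (H : SimpleGraph V) (re : Fin r → V) : H.Subgraph where
  verts := Set.range re
  Adj := fun _ _ => False
  adj_sub := fun h => h.elim
  edge_vert := fun h => h.elim
  symm := ⟨fun _ _ h => h.elim⟩

lemma rootSub_edgeSet : (rootSub H re).edgeSet = ∅ := by
  ext e
  refine e.ind (fun u v => ?_)
  simp [SimpleGraph.Subgraph.mem_edgeSet, rootSub]

lemma rootSub_ne_top (hne : Set.range re ≠ Set.univ) : rootSub H re ≠ ⊤ := by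
  intro h
  exact hne (by rw [← SimpleGraph.Subgraph.verts_top (G := H)]; exact congrArg SimpleGraph.Subgraph.verts h)

lemma dense_root (hdense : DensePattern α' H (Set.range re))
    (hne : Set.range re ≠ Set.univ) :
    ((Set.univ \ Set.range re).ncard : ℝ) < α' * (H.edgeSet.ncard : ℝ) := by
  have := hdense (rootSub H re) (rootSub_ne_top hne) (by rfl)
  rwa [rootSub_edgeSet, Set.diff_empty] at this

/-- every non-root vertex has a neighbor -/
lemma deg_pos (hdense : DensePattern α' H (Set.range re))
    (w : V) (hw : w ∉ Set.range re) : ∃ u, H.Adj w u := by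
  by_contra h
  push_neg at h
  have hno : ∀ u, ¬ H.Adj w u := fun u hu => (h u hu).elim
  set H' : H.Subgraph :=
    { verts := {w}ᶜ
      Adj := H.Adj
      adj_sub := id
      edge_vert := by
        intro u v huv
        simp only [Set.mem_compl_iff, Set.mem_singleton_iff]
        rintro rfl
        exact hno v huv
      symm := ⟨fun u v h => h.symm⟩ } with hH'
  have hne : H' ≠ ⊤ := by
    intro htop
    have : ({w}ᶜ : Set V) = Set.univ := by
      rw [← SimpleGraph.Subgraph.verts_top (G := H)]
      exact congrArg SimpleGraph.Subgraph.verts htop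
    have := this ▸ (Set.mem_univ w)
    simp at this
  have hsub : Set.range re ⊆ H'.verts := by
    intro x hx
    simp only [hH', Set.mem_compl_iff, Set.mem_singleton_iff]
    rintro rfl
    exact hw hx
  have hd := hdense H' hne hsub
  have hE : H.edgeSet \ H'.edgeSet = ∅ := by
    ext e
    refine e.ind (fun u v => ?_)
    simp [SimpleGraph.Subgraph.mem_edgeSet, hH', SimpleGraph.mem_edgeSet, imp_self]
  have hV : (Set.univ \ H'.verts) = {w} := by
    simp [hH']
  rw [hE, hV] at hd
  norm_num at hd
end Comb

section Main
variable {V : Type} [Fintype V] {H : SimpleGraph V} {r : ℕ} {re : Fin r → V} {α' : ℝ} {n : ℕ}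

lemma caseA (hA : Set.range re = Set.univ) (G : Fin n → Fin n → Bool)
    (I : Fin r → Fin n) : extCount H re G I ≤ 1 := by
  refine (Set.ncard_le_one_iff (Set.toFinite _)).2 ?_
  · intro P Q hP hQ
    obtain ⟨φ, hφi, hφr, hφe, hP1, hP2⟩ := hP
    obtain ⟨ψ, hψi, hψr, hψe, hQ1, hQ2⟩ := hQ
    have hfe : φ = ψ := by
      funext w
      have : w ∈ Set.range re := hA ▸ Set.mem_univ w
      obtain ⟨j, rfl⟩ := this
      rw [hφr, hψr]
    refine Prod.ext ?_ ?_
    · rw [hP1, hQ1, hfe]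
    · rw [hP2, hQ2, hfe]

def pairOf {n : ℕ} (a b : Fin n) : Fin n × Fin n := if a < b then (a, b) else (b, a)

lemma pairOf_comm (a b : Fin n) : pairOf a b = pairOf b a := by
  rcases lt_trichotomy a b with h | h | h
  · rw [pairOf, pairOf, if_pos h, if_neg (not_lt.2 h.le)]
  · rw [h]
  · rw [pairOf, pairOf, if_neg (not_lt.2 h.le), if_pos h]

lemma pairOf_cases (a b : Fin n) : pairOf a b = (a, b) ∨ pairOf a b = (b, a) := by
  rw [pairOf]; split_ifs <;> simp

lemma pairOf_inj {a b a' b' : Fin n} (hab : a ≠ b) (h : pairOf a b = pairOf a' b') :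
    (a = a' ∧ b = b') ∨ (a = b' ∧ b = a') := by
  rcases hab.lt_or_gt with hlt | hlt
  · rw [pairOf, if_pos hlt, pairOf] at h
    split_ifs at h with h'
    · exact Or.inl ⟨(Prod.mk.injEq _ _ _ _ ▸ h).1, (Prod.mk.injEq _ _ _ _ ▸ h).2⟩
    · exact Or.inr ⟨(Prod.mk.injEq _ _ _ _ ▸ h).1, (Prod.mk.injEq _ _ _ _ ▸ h).2⟩
  · rw [pairOf, if_neg (not_lt.2 hlt.le), pairOf] at h
    split_ifs at h with h'
    · exact Or.inr ⟨(Prod.mk.injEq _ _ _ _ ▸ h).2, (Prod.mk.injEq _ _ _ _ ▸ h).1⟩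
    · exact Or.inl ⟨(Prod.mk.injEq _ _ _ _ ▸ h).2, (Prod.mk.injEq _ _ _ _ ▸ h).1⟩

def pairsOf (H : SimpleGraph V) (φ : V → Fin n) : Set (Fin n × Fin n) :=
  {q | ∃ u v, H.Adj u v ∧ q = pairOf (φ u) (φ v)}

def FUnion (H : SimpleGraph V) {t : ℕ} (τ : Fin (t+1) → V → Fin n) (i : ℕ) :
    Set (Fin n × Fin n) :=
  ⋃ (j : Fin (t+1)) (_ : (j : ℕ) < i), pairsOf H (τ j)

def UUnion (re : Fin r → V) {t : ℕ} (τ : Fin (t+1) → V → Fin n) (i : ℕ) : Set (Fin n) :=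
  Set.range (τ 0 ∘ re) ∪ ⋃ (j : Fin (t+1)) (_ : (j : ℕ) < i), Set.range (τ j)

def Valid (H : SimpleGraph V) (re : Fin r → V) {t : ℕ} (τ : Fin (t+1) → V → Fin n) : Prop :=
  (∀ i, Function.Injective (τ i)) ∧
  (∀ i j, τ i (re j) = τ 0 (re j)) ∧
  (∀ i : Fin (t+1), ∃ u v, H.Adj u v ∧ pairOf (τ i u) (τ i v) ∉ FUnion H τ (i : ℕ))

lemma FUnion_succ {t : ℕ} (τ : Fin (t+1) → V → Fin n) (i : Fin (t+1)) :
    FUnion H τ ((i : ℕ)+1) = FUnion H τ i ∪ pairsOf H (τ i) := by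
  ext q
  simp only [FUnion, Set.mem_iUnion, Set.mem_union]
  constructor
  · rintro ⟨j, hj, hq⟩
    rcases Nat.lt_succ_iff_lt_or_eq.1 hj with h | h
    · exact Or.inl ⟨j, h, hq⟩
    · have : j = i := Fin.ext h
      subst this
      exact Or.inr hq
  · rintro (⟨j, hj, hq⟩ | hq)
    · exact ⟨j, Nat.lt_succ_of_lt hj, hq⟩
    · exact ⟨i, Nat.lt_succ_self _, hq⟩

lemma UUnion_succ {t : ℕ} (τ : Fin (t+1) → V → Fin n) (i : Fin (t+1)) :
    UUnion re τ ((i : ℕ)+1) = UUnion re τ i ∪ Set.range (τ i) := by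
  ext x
  simp only [UUnion, Set.mem_iUnion, Set.mem_union]
  constructor
  · rintro (h | ⟨j, hj, hq⟩)
    · exact Or.inl (Or.inl h)
    · rcases Nat.lt_succ_iff_lt_or_eq.1 hj with h | h
      · exact Or.inl (Or.inr ⟨j, h, hq⟩)
      · have : j = i := Fin.ext h
        subst this
        exact Or.inr hq
  · rintro ((h | ⟨j, hj, hq⟩) | hq)
    · exact Or.inl h
    · exact Or.inr ⟨j, Nat.lt_succ_of_lt hj, hq⟩
    · exact Or.inr ⟨i, Nat.lt_succ_self _, hq⟩

lemma FUnion_endpoints {t : ℕ} {τ : Fin (t+1) → V → Fin n} {i : ℕ}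
    {q : Fin n × Fin n} (hq : q ∈ FUnion H τ i) :
    q.1 ∈ UUnion re τ i ∧ q.2 ∈ UUnion re τ i := by
  simp only [FUnion, Set.mem_iUnion] at hq
  obtain ⟨j, hj, u, v, _, hq⟩ := hq
  have h1 : Set.range (τ j) ⊆ UUnion re τ i := by
    intro x hx
    exact Set.mem_union_right _ (Set.mem_iUnion.2 ⟨j, Set.mem_iUnion.2 ⟨hj, hx⟩⟩)
  subst hq
  rcases pairOf_cases (τ j u) (τ j v) with h | h <;> rw [h]
  · exact ⟨h1 ⟨u, rfl⟩, h1 ⟨v, rfl⟩⟩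
  · exact ⟨h1 ⟨v, rfl⟩, h1 ⟨u, rfl⟩⟩

lemma self_mem_pair {a b : Fin n} : a = (pairOf a b).1 ∨ a = (pairOf a b).2 := by
  rcases pairOf_cases a b with h | h <;> rw [h] <;> simp

/-- the overlap of copy `i` with the union of the previous copies, as a subgraph of `H` -/
def stepSub (H : SimpleGraph V) (re : Fin r → V) {t : ℕ} (τ : Fin (t+1) → V → Fin n)
    (hv : Valid H re τ) (i : Fin (t+1)) : H.Subgraph where
  verts := (τ i) ⁻¹' (UUnion re τ i)
  Adj := fun u v => H.Adj u v ∧ pairOf (τ i u) (τ i v) ∈ FUnion H τ (i : ℕ)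
  adj_sub := fun h => h.1
  edge_vert := by
    intro u v ⟨hadj, hmem⟩
    have h2 := FUnion_endpoints (re := re) hmem
    rcases self_mem_pair (a := τ i u) (b := τ i v) with h | h
    · exact Set.mem_preimage.2 (h ▸ h2.1)
    · exact Set.mem_preimage.2 (h ▸ h2.2)
  symm := by
    constructor
    intro u v ⟨hadj, hmem⟩
    exact ⟨hadj.symm, by rwa [pairOf_comm]⟩

lemma stepSub_ne_top {t : ℕ} {τ : Fin (t+1) → V → Fin n} (hv : Valid H re τ) (i : Fin (t+1)) :
    stepSub H re τ hv i ≠ ⊤ := by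
  intro htop
  obtain ⟨u, v, hadj, hnot⟩ := hv.2.2 i
  have : (stepSub H re τ hv i).Adj u v := by
    rw [htop]; exact SimpleGraph.Subgraph.top_adj.2 hadj
  exact hnot this.2

lemma step_lemma (hdense : ∀ H' : H.Subgraph, H' ≠ ⊤ → Set.range re ⊆ H'.verts →
      ((Set.univ \ H'.verts).ncard : ℝ) < α' * ((H.edgeSet \ H'.edgeSet).ncard : ℝ))
    {t : ℕ} {τ : Fin (t+1) → V → Fin n} (hv : Valid H re τ) (i : Fin (t+1)) :
    ∃ a b : ℕ, a ≤ Fintype.card V ∧ b ≤ H.edgeSet.ncard ∧ ((a : ℝ) < α' * b) ∧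
      (UUnion re τ ((i : ℕ)+1)).ncard = (UUnion re τ (i : ℕ)).ncard + a ∧
      (FUnion H τ ((i : ℕ)+1)).ncard = (FUnion H τ (i : ℕ)).ncard + b := by
  classical
  set S := stepSub H re τ hv i with hS
  have hroots : Set.range re ⊆ S.verts := by
    rintro x ⟨j, rfl⟩
    show τ i (re j) ∈ UUnion re τ (i : ℕ)
    rw [hv.2.1 i j]
    exact Set.mem_union_left _ ⟨j, rfl⟩
  have hlt := hdense S (stepSub_ne_top hv i) hroots
  refine ⟨(Set.univ \ S.verts).ncard, (H.edgeSet \ S.edgeSet).ncard, ?_, ?_, hlt, ?_, ?_⟩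
  · calc (Set.univ \ S.verts).ncard ≤ (Set.univ : Set V).ncard :=
        Set.ncard_le_ncard Set.diff_subset (Set.toFinite _)
      _ = Fintype.card V := by rw [Set.ncard_univ, Nat.card_eq_fintype_card]
  · exact Set.ncard_le_ncard Set.diff_subset (Set.toFinite _)
  · -- vertex count
    rw [UUnion_succ, ← Set.union_diff_self,
      Set.ncard_union_eq Set.disjoint_sdiff_right (Set.toFinite _) (Set.toFinite _)]
    congr 1
    have himg : Set.range (τ i) \ UUnion re τ (i : ℕ) = τ i '' (Set.univ \ S.verts) := by
      ext x
      constructor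
      · rintro ⟨⟨w, rfl⟩, hx⟩
        exact ⟨w, ⟨Set.mem_univ w, fun hw => hx hw⟩, rfl⟩
      · rintro ⟨w, ⟨-, hw⟩, rfl⟩
        exact ⟨⟨w, rfl⟩, fun hx => hw hx⟩
    rw [himg, Set.ncard_image_of_injective _ (hv.1 i)]
  · -- edge count
    set ι : Sym2 V → Fin n × Fin n :=
      Sym2.lift ⟨fun u v => pairOf (τ i u) (τ i v), fun u v => pairOf_comm _ _⟩ with hι
    have hιmk : ∀ u v, ι s(u, v) = pairOf (τ i u) (τ i v) := fun u v => Sym2.lift_mk _ u v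
    have hpairs : pairsOf H (τ i) = ι '' H.edgeSet := by
      ext q
      constructor
      · rintro ⟨u, v, hadj, rfl⟩
        exact ⟨s(u, v), H.mem_edgeSet.2 hadj, hιmk u v⟩
      · rintro ⟨e, he, rfl⟩
        induction e using Sym2.ind with
        | _ u v => exact ⟨u, v, H.mem_edgeSet.1 he, (hιmk u v).symm⟩
    have hSedge : ∀ e, e ∈ S.edgeSet ↔ e ∈ H.edgeSet ∧ ι e ∈ FUnion H τ (i : ℕ) := by
      intro e
      induction e using Sym2.ind with
      | _ u v =>
        rw [SimpleGraph.Subgraph.mem_edgeSet, SimpleGraph.mem_edgeSet, hιmk]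
        exact Iff.rfl
    have hinj : Set.InjOn ι H.edgeSet := by
      intro e he e' he' heq
      induction e using Sym2.ind with
      | _ u v =>
        induction e' using Sym2.ind with
        | _ u' v' =>
          rw [hιmk, hιmk] at heq
          have huv : τ i u ≠ τ i v :=
            fun h => (H.mem_edgeSet.1 he).ne (hv.1 i h)
          rcases pairOf_inj huv heq with ⟨h1, h2⟩ | ⟨h1, h2⟩
          · rw [Sym2.eq_iff]
            exact Or.inl ⟨hv.1 i h1, hv.1 i h2⟩
          · rw [Sym2.eq_iff]
            exact Or.inr ⟨hv.1 i h1, hv.1 i h2⟩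
    have himg : ι '' (H.edgeSet \ S.edgeSet) = pairsOf H (τ i) \ FUnion H τ (i : ℕ) := by
      rw [hpairs]
      ext q
      constructor
      · rintro ⟨e, ⟨he, hne⟩, rfl⟩
        refine ⟨⟨e, he, rfl⟩, fun hmem => hne ((hSedge e).2 ⟨he, hmem⟩)⟩
      · rintro ⟨⟨e, he, rfl⟩, hnm⟩
        exact ⟨e, ⟨he, fun hmem => hnm ((hSedge e).1 hmem).2⟩, rfl⟩
    rw [FUnion_succ, ← Set.union_diff_self,
      Set.ncard_union_eq Set.disjoint_sdiff_right (Set.toFinite _) (Set.toFinite _)]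
    congr 1
    rw [← himg, Set.ncard_image_of_injOn (hinj.mono Set.diff_subset)]

lemma UUnion_zero {t : ℕ} (τ : Fin (t+1) → V → Fin n) :
    UUnion re τ 0 = Set.range (τ 0 ∘ re) := by
  simp [UUnion]

lemma FUnion_zero {t : ℕ} (τ : Fin (t+1) → V → Fin n) :
    FUnion H τ 0 = ∅ := by
  simp [FUnion]

lemma telescope (hdense : ∀ H' : H.Subgraph, H' ≠ ⊤ → Set.range re ⊆ H'.verts →
      ((Set.univ \ H'.verts).ncard : ℝ) < α' * ((H.edgeSet \ H'.edgeSet).ncard : ℝ))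
    (hre : Function.Injective re)
    {t : ℕ} {τ : Fin (t+1) → V → Fin n} (hv : Valid H re τ)
    (γ : ℝ) (hγ : ∀ a b : ℕ, a ≤ Fintype.card V → b ≤ H.edgeSet.ncard →
      (a : ℝ) < α' * b → γ ≤ α' * b - a) :
    ∀ k, k ≤ t+1 →
      ((UUnion re τ k).ncard : ℝ) + k * γ ≤ r + α' * ((FUnion H τ k).ncard : ℝ) := by
  intro k
  induction k with
  | zero =>
    intro _
    rw [UUnion_zero, FUnion_zero]
    have : (Set.range (τ 0 ∘ re)).ncard = r := by
      rw [← Set.image_univ, Set.ncard_image_of_injective _ ((hv.1 0).comp hre),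
        Set.ncard_univ, Nat.card_eq_fintype_card, Fintype.card_fin]
    rw [this]
    simp
  | succ k ih =>
    intro hk
    have hk' : k < t + 1 := by omega
    set i : Fin (t+1) := ⟨k, hk'⟩ with hi
    obtain ⟨a, b, ham, hbe, hab, hU, hF⟩ := step_lemma hdense hv i
    have hγab := hγ a b ham hbe hab
    have hUk : ((UUnion re τ (k+1)).ncard : ℝ) = (UUnion re τ k).ncard + a := by
      exact_mod_cast congrArg (Nat.cast (R := ℝ)) hU
    have hFk : ((FUnion H τ (k+1)).ncard : ℝ) = (FUnion H τ k).ncard + b := by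
      exact_mod_cast congrArg (Nat.cast (R := ℝ)) hF
    have ihk := ih (by omega)
    rw [hUk, hFk]
    push_cast
    push_cast at ihk
    nlinarith [ihk, hγab]

def extSet (H : SimpleGraph V) (re : Fin r → V) (G : Fin n → Fin n → Bool)
    (I : Fin r → Fin n) : Set (Set (Fin n) × Set (Fin n × Fin n)) :=
  {P | ∃ φ : V → Fin n, Function.Injective φ ∧ (∀ i, φ (re i) = I i) ∧
      (∀ u v : V, H.Adj u v → edgePresent G (φ u) (φ v)) ∧
      P.1 = Set.range φ ∧
      P.2 = {e | ∃ u v : V, H.Adj u v ∧ φ u < φ v ∧ e = (φ u, φ v)}}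

lemma pairsOf_eq_image (φ : V → Fin n) :
    pairsOf H φ =
      (Sym2.lift ⟨fun u v => pairOf (φ u) (φ v), fun u v => pairOf_comm _ _⟩) '' H.edgeSet := by
  ext q
  constructor
  · rintro ⟨u, v, hadj, rfl⟩
    exact ⟨s(u, v), H.mem_edgeSet.2 hadj, Sym2.lift_mk _ u v⟩
  · rintro ⟨e, he, rfl⟩
    induction e using Sym2.ind with
    | _ u v => exact ⟨u, v, H.mem_edgeSet.1 he, Sym2.lift_mk _ u v⟩

lemma pairsOf_ncard_le (φ : V → Fin n) : (pairsOf H φ).ncard ≤ H.edgeSet.ncard := by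
  rw [pairsOf_eq_image]
  exact Set.ncard_image_le (Set.toFinite _)

lemma FUnion_ncard_le {t : ℕ} (τ : Fin (t+1) → V → Fin n) :
    ∀ i, i ≤ t+1 → (FUnion H τ i).ncard ≤ i * H.edgeSet.ncard := by
  intro i
  induction i with
  | zero => intro _; rw [FUnion_zero]; simp
  | succ i ih =>
    intro hi
    have hfs := FUnion_succ (H := H) τ ⟨i, by omega⟩
    simp only [Fin.val_mk] at hfs
    rw [hfs]
    calc (FUnion H τ i ∪ pairsOf H (τ ⟨i, by omega⟩)).ncard
        ≤ (FUnion H τ i).ncard + (pairsOf H (τ ⟨i, by omega⟩)).ncard := Set.ncard_union_le _ _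
      _ ≤ i * H.edgeSet.ncard + H.edgeSet.ncard := Nat.add_le_add (ih (by omega)) (pairsOf_ncard_le _)
      _ = (i+1) * H.edgeSet.ncard := by ring

lemma bound_lemma
    (hdeg : ∀ w ∉ Set.range re, ∃ u, H.Adj w u)
    {G : Fin n → Fin n → Bool} {I : Fin r → Fin n} (F : Set (Fin n × Fin n)) :
    ({P ∈ extSet H re G I | P.2 ⊆ F}).ncard
      ≤ (Set.range I ∪ Prod.fst '' F ∪ Prod.snd '' F).ncard ^ Fintype.card V := by
  classical
  set T : Set (Fin n) := Set.range I ∪ Prod.fst '' F ∪ Prod.snd '' F with hT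
  set B := {P ∈ extSet H re G I | P.2 ⊆ F} with hB
  have hchoice : ∀ P ∈ B, ∃ φ : V → Fin n, Function.Injective φ ∧ (∀ i, φ (re i) = I i) ∧
      (∀ u v : V, H.Adj u v → edgePresent G (φ u) (φ v)) ∧
      P.1 = Set.range φ ∧
      P.2 = {e | ∃ u v : V, H.Adj u v ∧ φ u < φ v ∧ e = (φ u, φ v)} := fun P hP => hP.1
  choose! φf hinj hroot _hedge hP1 hP2 using hchoice
  have hmemT : ∀ P (hP : P ∈ B) (w : V), φf P hP w ∈ T := by
    intro P hP w
    by_cases hw : w ∈ Set.range re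
    · obtain ⟨j, rfl⟩ := hw
      rw [hroot P hP j]
      exact Or.inl (Or.inl ⟨j, rfl⟩)
    · obtain ⟨u, hadj⟩ := hdeg w hw
      have hne' : φf P hP w ≠ φf P hP u := fun h => hadj.ne (hinj P hP h)
      rcases hne'.lt_or_gt with hlt | hlt
      · have : (φf P hP w, φf P hP u) ∈ P.2 := by
          rw [hP2 P hP]; exact ⟨w, u, hadj, hlt, rfl⟩
        have hF : (φf P hP w, φf P hP u) ∈ F := hP.2 this
        exact Or.inl (Or.inr ⟨_, hF, rfl⟩)
      · have : (φf P hP u, φf P hP w) ∈ P.2 := by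
          rw [hP2 P hP]; exact ⟨u, w, hadj.symm, hlt, rfl⟩
        have hF : (φf P hP u, φf P hP w) ∈ F := hP.2 this
        exact Or.inr ⟨_, hF, rfl⟩
  have hfin : Finite ↥T := Set.Finite.to_subtype (Set.toFinite _)
  let f : ↥B → (V → ↥T) := fun P => fun w => ⟨φf P P.2 w, hmemT P P.2 w⟩
  have hfinj : Function.Injective f := by
    rintro ⟨P, hP⟩ ⟨Q, hQ⟩ h
    have hφ : φf P hP = φf Q hQ := by
      funext w
      have := congrFun h w
      exact Subtype.ext_iff.1 this
    have : P = Q := by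
      refine Prod.ext ?_ ?_
      · rw [hP1 P hP, hP1 Q hQ, hφ]
      · rw [hP2 P hP, hP2 Q hQ, hφ]
    exact Subtype.ext this
  calc B.ncard = Nat.card ↥B := (Nat.card_coe_set_eq B).symm
    _ ≤ Nat.card (V → ↥T) := Nat.card_le_card_of_injective f hfinj
    _ = Nat.card ↥T ^ Nat.card V := Nat.card_fun
    _ = T.ncard ^ Fintype.card V := by rw [Nat.card_coe_set_eq, Nat.card_eq_fintype_card]

lemma extCount_eq_extSet (G : Fin n → Fin n → Bool) (I : Fin r → Fin n) :
    extCount H re G I = (extSet H re G I).ncard := rfl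

lemma FUnion_congr {t : ℕ} {σ σ' : Fin (t+1) → V → Fin n} {i : ℕ}
    (h : ∀ k : Fin (t+1), (k : ℕ) < i → σ' k = σ k) : FUnion H σ' i = FUnion H σ i := by
  unfold FUnion
  ext q
  simp only [Set.mem_iUnion]
  constructor
  · rintro ⟨j, hj, hq⟩
    exact ⟨j, hj, by rwa [h j hj] at hq⟩
  · rintro ⟨j, hj, hq⟩
    exact ⟨j, hj, by rwa [h j hj]⟩

def Cond (H : SimpleGraph V) (re : Fin r → V) (G : Fin n → Fin n → Bool) (I : Fin r → Fin n)
    {t : ℕ} (j : Fin (t+1)) (σ : Fin (t+1) → V → Fin n) : Prop :=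
  Function.Injective (σ j) ∧ (∀ l, σ j (re l) = I l) ∧
    (∀ u v, H.Adj u v → edgePresent G (σ j u) (σ j v)) ∧
    (∃ u v, H.Adj u v ∧ pairOf (σ j u) (σ j v) ∉ FUnion H σ (j : ℕ))

lemma extract (hdeg : ∀ w ∉ Set.range re, ∃ u, H.Adj w u) {t : ℕ}
    {G : Fin n → Fin n → Bool} {I : Fin r → Fin n}
    (hcard : (r + 2 * ((t+1) * H.edgeSet.ncard)) ^ Fintype.card V < extCount H re G I) :
    ∃ τ : Fin (t+1) → V → Fin n, Valid H re τ ∧ (∀ j, τ 0 (re j) = I j) ∧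
      (∀ i : Fin (t+1), ∀ u v, H.Adj u v → edgePresent G (τ i u) (τ i v)) := by
  classical
  have hne0 : (extSet H re G I).Nonempty := by
    rw [Set.nonempty_iff_ne_empty]
    intro h
    rw [extCount_eq_extSet, h, Set.ncard_empty] at hcard
    omega
  obtain ⟨P₀, φ₀, hP₀⟩ := hne0
  have main : ∀ i, i ≤ t + 1 → ∃ σ : Fin (t+1) → V → Fin n,
      ∀ j : Fin (t+1), (j : ℕ) < i → Cond H re G I j σ := by
    intro i
    induction i with
    | zero => exact fun _ => ⟨fun _ => φ₀, fun j hj => absurd hj (Nat.not_lt_zero _)⟩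
    | succ i ih =>
      intro hi
      obtain ⟨σ, hσ⟩ := ih (by omega)
      set F := FUnion H σ i with hFdef
      have hFcard : F.ncard ≤ (t+1) * H.edgeSet.ncard :=
        le_trans (FUnion_ncard_le σ i (by omega))
          (Nat.mul_le_mul_right _ (by omega))
      have hTcard : (Set.range I ∪ Prod.fst '' F ∪ Prod.snd '' F).ncard
          ≤ r + 2 * ((t+1) * H.edgeSet.ncard) := by
        calc (Set.range I ∪ Prod.fst '' F ∪ Prod.snd '' F).ncard
            ≤ (Set.range I ∪ Prod.fst '' F).ncard + (Prod.snd '' F).ncard :=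
              Set.ncard_union_le _ _
          _ ≤ (Set.range I).ncard + (Prod.fst '' F).ncard + (Prod.snd '' F).ncard :=
              Nat.add_le_add_right (Set.ncard_union_le _ _) _
          _ ≤ r + F.ncard + F.ncard := by
              have h1 : (Set.range I).ncard ≤ r := by
                rw [← Set.image_univ]
                calc (I '' Set.univ).ncard ≤ (Set.univ : Set (Fin r)).ncard :=
                    Set.ncard_image_le (Set.toFinite _)
                  _ = r := by rw [Set.ncard_univ, Nat.card_eq_fintype_card, Fintype.card_fin]
              exact Nat.add_le_add (Nat.add_le_add h1
                (Set.ncard_image_le (Set.toFinite _))) (Set.ncard_image_le (Set.toFinite _))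
          _ ≤ r + 2 * ((t+1) * H.edgeSet.ncard) := by omega
      have hex : ∃ P ∈ extSet H re G I, ¬ P.2 ⊆ F := by
        by_contra hcon
        push_neg at hcon
        have heq : {P ∈ extSet H re G I | P.2 ⊆ F} = extSet H re G I := by
          ext P
          exact ⟨fun h => h.1, fun h => ⟨h, hcon P h⟩⟩
        have hb := bound_lemma (re := re) hdeg (G := G) (I := I) F
        rw [heq, ← extCount_eq_extSet] at hb
        have := le_trans hb (Nat.pow_le_pow_left hTcard _)
        omega
      obtain ⟨P, hPmem, hPnsub⟩ := hex
      obtain ⟨φ, hφi, hφr, hφe, hP1, hP2⟩ := hPmem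
      obtain ⟨e, heP, heF⟩ := Set.not_subset.1 hPnsub
      rw [hP2] at heP
      obtain ⟨u, v, hadj, hlt, rfl⟩ := heP
      have hi' : i < t + 1 := by omega
      set σ' := Function.update σ ⟨i, hi'⟩ φ with hσ'
      have hupd : ∀ k : Fin (t+1), (k : ℕ) < i → σ' k = σ k := by
        intro k hk
        apply Function.update_of_ne
        intro hkk
        rw [hkk] at hk
        simp at hk
      refine ⟨σ', fun j hj => ?_⟩
      by_cases hji : (j : ℕ) < i
      · have hjσ : σ' j = σ j := hupd j hji
        obtain ⟨h1, h2, h3, u', v', hadj', hnp⟩ := hσ j hji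
        refine ⟨by rwa [hjσ], by rwa [hjσ], by rwa [hjσ], u', v', hadj', ?_⟩
        rw [hjσ, FUnion_congr (fun k hk => hupd k (lt_trans hk hji))]
        exact hnp
      · have hjeq : j = ⟨i, hi'⟩ := by
          apply Fin.ext
          simp only [Fin.val_mk]
          omega
        subst hjeq
        have hjσ : σ' ⟨i, hi'⟩ = φ := Function.update_self _ _ _
        refine ⟨by rwa [hjσ], by rwa [hjσ], by rwa [hjσ], u, v, hadj, ?_⟩
        rw [hjσ]
        have hFeq : FUnion H σ' ((⟨i, hi'⟩ : Fin (t+1)) : ℕ) = F := by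
          rw [hFdef]
          exact FUnion_congr (fun k hk => hupd k hk)
        rw [hFeq]
        rw [pairOf, if_pos hlt]
        exact heF
  obtain ⟨σ, hσ⟩ := main (t+1) le_rfl
  have hc : ∀ j : Fin (t+1), Cond H re G I j σ := fun j => hσ j j.isLt
  exact ⟨σ, ⟨fun i => (hc i).1, fun i j => by rw [(hc i).2.1 j, (hc 0).2.1 j],
    fun i => (hc i).2.2.2⟩, (hc 0).2.1, fun i => (hc i).2.2.1⟩

lemma UUnion_full_eq {t : ℕ} (τ : Fin (t+1) → V → Fin n) :
    UUnion re τ (t+1) = ⋃ j : Fin (t+1), Set.range (τ j) := by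
  ext x
  simp only [UUnion, Set.mem_union, Set.mem_iUnion]
  constructor
  · rintro (⟨j, rfl⟩ | ⟨j, _, hj⟩)
    · exact ⟨0, ⟨re j, rfl⟩⟩
    · exact ⟨j, hj⟩
  · rintro ⟨j, hj⟩
    exact Or.inr ⟨j, j.isLt, hj⟩

lemma UUnion_full_ncard_le {t : ℕ} (τ : Fin (t+1) → V → Fin n) :
    (UUnion re τ (t+1)).ncard ≤ (t+1) * Fintype.card V := by
  rw [UUnion_full_eq]
  have : ∀ k : ℕ, (⋃ (j : Fin (t+1)) (_ : (j : ℕ) < k), Set.range (τ j)).ncard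
      ≤ k * Fintype.card V := by
    intro k
    induction k with
    | zero => simp
    | succ k ih =>
      by_cases hk : k < t + 1
      · have hsp : (⋃ (j : Fin (t+1)) (_ : (j : ℕ) < k+1), Set.range (τ j))
            = (⋃ (j : Fin (t+1)) (_ : (j : ℕ) < k), Set.range (τ j)) ∪ Set.range (τ ⟨k, hk⟩) := by
          ext x
          simp only [Set.mem_iUnion, Set.mem_union]
          constructor
          · rintro ⟨j, hj, hx⟩
            rcases Nat.lt_succ_iff_lt_or_eq.1 hj with h | h
            · exact Or.inl ⟨j, h, hx⟩
            · have : j = ⟨k, hk⟩ := Fin.ext h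
              subst this
              exact Or.inr hx
          · rintro (⟨j, hj, hx⟩ | hx)
            · exact ⟨j, Nat.lt_succ_of_lt hj, hx⟩
            · exact ⟨⟨k, hk⟩, Nat.lt_succ_self _, hx⟩
        rw [hsp]
        calc ((⋃ (j : Fin (t+1)) (_ : (j : ℕ) < k), Set.range (τ j)) ∪ Set.range (τ ⟨k, hk⟩)).ncard
            ≤ (⋃ (j : Fin (t+1)) (_ : (j : ℕ) < k), Set.range (τ j)).ncard
              + (Set.range (τ ⟨k, hk⟩)).ncard := Set.ncard_union_le _ _
          _ ≤ k * Fintype.card V + Fintype.card V := by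
              refine Nat.add_le_add ih ?_
              rw [← Set.image_univ]
              calc (τ ⟨k, hk⟩ '' Set.univ).ncard ≤ (Set.univ : Set V).ncard :=
                  Set.ncard_image_le (Set.toFinite _)
                _ = Fintype.card V := by rw [Set.ncard_univ, Nat.card_eq_fintype_card]
          _ = (k+1) * Fintype.card V := by ring
      · have hsp : (⋃ (j : Fin (t+1)) (_ : (j : ℕ) < k+1), Set.range (τ j))
            = (⋃ (j : Fin (t+1)) (_ : (j : ℕ) < k), Set.range (τ j)) := by
          ext x
          simp only [Set.mem_iUnion]
          constructor
          · rintro ⟨j, _, hx⟩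
            exact ⟨j, by omega, hx⟩
          · rintro ⟨j, hj, hx⟩
            exact ⟨j, by omega, hx⟩
        rw [hsp]
        exact le_trans ih (Nat.mul_le_mul_right _ (Nat.le_succ _))
  have heq : (⋃ j : Fin (t+1), Set.range (τ j))
      = ⋃ (j : Fin (t+1)) (_ : (j : ℕ) < t+1), Set.range (τ j) := by
    ext x
    simp only [Set.mem_iUnion]
    exact ⟨fun ⟨j, hj⟩ => ⟨j, j.isLt, hj⟩, fun ⟨j, _, hj⟩ => ⟨j, hj⟩⟩
  rw [heq]
  exact this (t+1)

lemma count_lemma {t : ℕ} (s : ℕ) :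
    ({τ : Fin (t+1) → V → Fin n | Valid H re τ ∧ (UUnion re τ (t+1)).ncard = s}).ncard
      ≤ n ^ s * (s ^ Fintype.card V) ^ (t+1) := by
  classical
  set A := {τ : Fin (t+1) → V → Fin n | Valid H re τ ∧ (UUnion re τ (t+1)).ncard = s} with hA
  have hmem : ∀ (τ : Fin (t+1) → V → Fin n) (i : Fin (t+1)) (w : V),
      τ i w ∈ (UUnion re τ (t+1)) := by
    intro τ i w
    exact Set.mem_union_right _ (Set.mem_iUnion.2 ⟨i, Set.mem_iUnion.2 ⟨i.isLt, ⟨w, rfl⟩⟩⟩)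
  have hcardU : ∀ τ ∈ A, Fintype.card ↥(UUnion re τ (t+1)) = s := by
    intro τ hτ
    have h2 := hτ.2
    rwa [Set.ncard_eq_toFinset_card', Set.toFinset_card] at h2
  let eqv : ∀ τ ∈ A, ↥(UUnion re τ (t+1)) ≃ Fin s := fun τ hτ =>
    Fintype.equivFinOfCardEq (hcardU τ hτ)
  let f : ↥A → (Fin s → Fin n) × (Fin (t+1) → V → Fin s) := fun τA =>
    ⟨fun k => ((eqv τA.1 τA.2).symm k : Fin n),
     fun i w => eqv τA.1 τA.2 ⟨τA.1 i w, hmem τA.1 i w⟩⟩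
  have hrecover : ∀ (τA : ↥A) (i : Fin (t+1)) (w : V),
      (f τA).1 ((f τA).2 i w) = τA.1 i w := by
    intro τA i w
    show ((eqv τA.1 τA.2).symm ((eqv τA.1 τA.2) ⟨τA.1 i w, _⟩) : Fin n) = τA.1 i w
    rw [Equiv.symm_apply_apply]
  have hfinj : Function.Injective f := by
    intro x y h
    apply Subtype.ext
    funext i w
    rw [← hrecover x i w, ← hrecover y i w, h]
  calc A.ncard = Nat.card ↥A := (Nat.card_coe_set_eq A).symm
    _ ≤ Nat.card ((Fin s → Fin n) × (Fin (t+1) → V → Fin s)) :=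
        Nat.card_le_card_of_injective f hfinj
    _ = n ^ s * (s ^ Fintype.card V) ^ (t+1) := by
        rw [Nat.card_prod, Nat.card_fun, Nat.card_fun]
        congr 1
        · rw [Nat.card_eq_fintype_card, Nat.card_eq_fintype_card, Fintype.card_fin, Fintype.card_fin]
        · rw [Nat.card_fun, Nat.card_eq_fintype_card, Nat.card_eq_fintype_card,
            Nat.card_eq_fintype_card, Fintype.card_fin, Fintype.card_fin]

lemma edgePresent_pairOf {G : Fin n → Fin n → Bool} {a b : Fin n} (hab : a ≠ b) :
    edgePresent G a b ↔ G (pairOf a b).1 (pairOf a b).2 = true := by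
  rcases hab.lt_or_gt with h | h
  · rw [pairOf, if_pos h]
    constructor
    · rintro (⟨_, hg⟩ | ⟨hba, _⟩)
      · exact hg
      · exact absurd h (not_lt.2 hba.le)
    · intro hg; exact Or.inl ⟨h, hg⟩
  · rw [pairOf, if_neg (not_lt.2 h.le)]
    constructor
    · rintro (⟨hab', _⟩ | ⟨_, hg⟩)
      · exact absurd h (not_lt.2 hab'.le)
      · exact hg
    · intro hg; exact Or.inr ⟨h, hg⟩

lemma bad_measure_le (hα₁ : 0 < α') (hdense : DensePattern α' H (Set.range re))
    (hre : Function.Injective re) (hne : Set.range re ≠ Set.univ)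
    (γ : ℝ) (hγ : ∀ a b : ℕ, a ≤ Fintype.card V → b ≤ H.edgeSet.ncard →
      (a : ℝ) < α' * b → γ ≤ α' * b - a)
    (t : ℕ) {n : ℕ} (hn : 1 ≤ n) :
    erMeasure n ((n : ℝ) ^ (-α'))
      {G : Fin n → Fin n → Bool | ∃ I : Fin r → Fin n, Function.Injective I ∧
        (r + 2 * ((t+1) * H.edgeSet.ncard)) ^ Fintype.card V < extCount H re G I}
    ≤ ENNReal.ofReal ((((t+1) * Fintype.card V + 1 : ℕ) *
        ((((t+1) * Fintype.card V) ^ Fintype.card V) ^ (t+1) : ℕ)) *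
        (n : ℝ) ^ ((r : ℝ) - (t+1) * γ)) := by
  classical
  set m := Fintype.card V with hm
  set eH := H.edgeSet.ncard with heH
  have hn1 : (1 : ℝ) ≤ (n : ℝ) := by exact_mod_cast hn
  have hnpos : (0 : ℝ) < (n : ℝ) := lt_of_lt_of_le one_pos hn1
  set p := (n : ℝ) ^ (-α') with hp
  have hp0 : 0 ≤ p := Real.rpow_nonneg (le_of_lt hnpos) _
  have hp1 : p ≤ 1 := Real.rpow_le_one_of_one_le_of_nonpos hn1 (by linarith)
  set Tn : Finset (Fin (t+1) → V → Fin n) := Finset.univ.filter (fun τ => Valid H re τ) with hTn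
  set Fall : (Fin (t+1) → V → Fin n) → Finset (Fin n × Fin n) :=
    fun τ => (Set.toFinite (FUnion H τ (t+1))).toFinset with hFall
  set Ev : (Fin (t+1) → V → Fin n) → Set (Fin n → Fin n → Bool) :=
    fun τ => {G | ∀ q ∈ Fall τ, G q.1 q.2 = true} with hEv
  -- inclusion of the bad event in the union of tuple events
  have hsub : {G : Fin n → Fin n → Bool | ∃ I : Fin r → Fin n, Function.Injective I ∧
      (r + 2 * ((t+1) * eH)) ^ m < extCount H re G I} ⊆ ⋃ τ ∈ Tn, Ev τ := by
    rintro G ⟨I, hI, hcard⟩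
    obtain ⟨τ, hval, hroot, hedge⟩ := extract (deg_pos hdense) hcard
    refine Set.mem_iUnion₂.2 ⟨τ, by simp [hTn, hval], ?_⟩
    intro q hq
    rw [Set.Finite.mem_toFinset] at hq
    simp only [FUnion, Set.mem_iUnion] at hq
    obtain ⟨j, _, u, v, hadj, rfl⟩ := hq
    have hne' : τ j u ≠ τ j v := fun h => hadj.ne ((hval.1 j) h)
    exact (edgePresent_pairOf hne').1 (hedge j u v hadj)
  refine le_trans (measure_mono hsub) ?_
  refine le_trans (measure_biUnion_finset_le Tn Ev) ?_
  have hEle : ∀ τ ∈ Tn, erMeasure n p (Ev τ) ≤ ENNReal.ofReal (p ^ (Fall τ).card) := by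
    intro τ _
    refine le_trans (erMeasure_pairs_le n p hp0 hp1 (Fall τ)) ?_
    rw [ENNReal.ofReal_pow hp0]
  refine le_trans (Finset.sum_le_sum hEle) ?_
  rw [← ENNReal.ofReal_sum_of_nonneg (fun τ _ => pow_nonneg hp0 _)]
  apply ENNReal.ofReal_le_ofReal
  -- now a real-number estimate
  have hkey : ∀ τ ∈ Tn, p ^ (Fall τ).card
      ≤ (n : ℝ) ^ ((r : ℝ) - (t+1) * γ) * (n : ℝ) ^ (-((UUnion re τ (t+1)).ncard : ℝ)) := by
    intro τ hτ
    have hval : Valid H re τ := by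
      rw [hTn, Finset.mem_filter] at hτ
      exact hτ.2
    have htel := telescope hdense hre hval γ hγ (t+1) le_rfl
    have hBeq : ((Fall τ).card : ℝ) = ((FUnion H τ (t+1)).ncard : ℝ) := by
      rw [Set.ncard_eq_toFinset_card _ (Set.toFinite _)]
    set B := (Fall τ).card with hB
    set sU := (UUnion re τ (t+1)).ncard with hsU
    have hexp : -α' * B ≤ ((r : ℝ) - (t+1) * γ) + (-(sU : ℝ)) := by
      rw [hBeq]
      push_cast at htel ⊢
      nlinarith [htel]
    calc p ^ B = (n : ℝ) ^ (-α' * (B : ℝ)) := by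
          rw [hp, ← Real.rpow_natCast ((n : ℝ) ^ (-α')) B, ← Real.rpow_mul (le_of_lt hnpos)]
      _ ≤ (n : ℝ) ^ (((r : ℝ) - (t+1) * γ) + (-(sU : ℝ))) :=
          Real.rpow_le_rpow_of_exponent_le hn1 hexp
      _ = (n : ℝ) ^ ((r : ℝ) - (t+1) * γ) * (n : ℝ) ^ (-(sU : ℝ)) :=
          Real.rpow_add hnpos _ _
  refine le_trans (Finset.sum_le_sum hkey) ?_
  rw [← Finset.mul_sum]
  rw [mul_comm (((((t+1) * m + 1 : ℕ)) : ℝ) * _) _]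
  refine mul_le_mul_of_nonneg_left ?_ (Real.rpow_nonneg (le_of_lt hnpos) _)
  -- grouping by the size of the union
  have hmaps : ∀ τ ∈ Tn, (UUnion re τ (t+1)).ncard ∈ Finset.range ((t+1) * m + 1) := by
    intro τ _
    rw [Finset.mem_range]
    exact Nat.lt_succ_of_le (UUnion_full_ncard_le τ)
  have hgroup : ∑ τ ∈ Tn, (n : ℝ) ^ (-((UUnion re τ (t+1)).ncard : ℝ))
      = ∑ s ∈ Finset.range ((t+1) * m + 1),
          ∑ τ ∈ Tn.filter (fun τ => (UUnion re τ (t+1)).ncard = s),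
            (n : ℝ) ^ (-((UUnion re τ (t+1)).ncard : ℝ)) := by
    rw [Finset.sum_fiberwise_eq_sum_filter]
    rw [Finset.filter_true_of_mem hmaps]
  rw [hgroup]
  have hinner : ∀ s ∈ Finset.range ((t+1) * m + 1),
      ∑ τ ∈ Tn.filter (fun τ => (UUnion re τ (t+1)).ncard = s),
        (n : ℝ) ^ (-((UUnion re τ (t+1)).ncard : ℝ))
      ≤ ((((t+1) * m) ^ m) ^ (t+1) : ℕ) := by
    intro s hs
    rw [Finset.mem_range] at hs
    have hconst : ∀ τ ∈ Tn.filter (fun τ => (UUnion re τ (t+1)).ncard = s),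
        (n : ℝ) ^ (-((UUnion re τ (t+1)).ncard : ℝ)) = (n : ℝ) ^ (-(s : ℝ)) := by
      intro τ hτ
      rw [Finset.mem_filter] at hτ
      rw [hτ.2]
    rw [Finset.sum_congr rfl hconst, Finset.sum_const, nsmul_eq_mul]
    have hcount : (Tn.filter (fun τ => (UUnion re τ (t+1)).ncard = s)).card
        ≤ n ^ s * (s ^ m) ^ (t+1) := by
      have hSet : ((Tn.filter (fun τ => (UUnion re τ (t+1)).ncard = s) : Finset _) : Set _)
          = {τ : Fin (t+1) → V → Fin n | Valid H re τ ∧ (UUnion re τ (t+1)).ncard = s} := by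
        ext τ
        simp [hTn, Finset.mem_filter]
      have := count_lemma (H := H) (re := re) (n := n) (t := t) s
      rw [← hSet, Set.ncard_coe_finset] at this
      exact this
    calc ((Tn.filter (fun τ => (UUnion re τ (t+1)).ncard = s)).card : ℝ) * (n : ℝ) ^ (-(s : ℝ))
        ≤ ((n ^ s * (s ^ m) ^ (t+1) : ℕ) : ℝ) * (n : ℝ) ^ (-(s : ℝ)) := by
          refine mul_le_mul_of_nonneg_right ?_ (Real.rpow_nonneg (le_of_lt hnpos) _)
          exact_mod_cast hcount
      _ = ((s ^ m) ^ (t+1) : ℕ) * ((n : ℝ) ^ (s : ℕ) * (n : ℝ) ^ (-(s : ℝ))) := by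
          push_cast
          ring
      _ = ((s ^ m) ^ (t+1) : ℕ) := by
          rw [← Real.rpow_natCast (n : ℝ) s, ← Real.rpow_add hnpos]
          simp
      _ ≤ ((((t+1) * m) ^ m) ^ (t+1) : ℕ) := by
          have : (s ^ m) ^ (t+1) ≤ (((t+1) * m) ^ m) ^ (t+1) :=
            Nat.pow_le_pow_left (Nat.pow_le_pow_left (by omega) _) _
          exact_mod_cast this
  calc ∑ s ∈ Finset.range ((t+1) * m + 1),
        ∑ τ ∈ Tn.filter (fun τ => (UUnion re τ (t+1)).ncard = s),
          (n : ℝ) ^ (-((UUnion re τ (t+1)).ncard : ℝ))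
      ≤ ∑ s ∈ Finset.range ((t+1) * m + 1), (((((t+1) * m) ^ m) ^ (t+1) : ℕ) : ℝ) :=
        Finset.sum_le_sum hinner
    _ = (((t+1) * m + 1 : ℕ) : ℝ) * ((((t+1) * m) ^ m) ^ (t+1) : ℕ) := by
        rw [Finset.sum_const, nsmul_eq_mul, Finset.card_range]

end Main

lemma allMeasurable {n : ℕ} (s : Set (Fin n → Fin n → Bool)) : MeasurableSet s :=
  Set.Finite.measurableSet (Set.toFinite s)

theorem stmt8 (α' : ℝ) (hα₁ : 0 < α') (hα₂ : α' < 1)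
    (V : Type) [Fintype V] (H : SimpleGraph V) (r : ℕ)
    (re : Fin r → V) (hre : Function.Injective re)
    (hdense : DensePattern α' H (Set.range re)) :
    ∃ κ : ℕ, Tendsto
      (fun n : ℕ => erMeasure n ((n : ℝ) ^ (-α'))
        {G | ∀ I : Fin r → Fin n, Function.Injective I → extCount H re G I ≤ κ})
      atTop (nhds 1) := by
  classical
  have hp0 : ∀ n : ℕ, 0 ≤ (n : ℝ) ^ (-α') := fun n => Real.rpow_nonneg (Nat.cast_nonneg n) _
  have hp1 : ∀ n : ℕ, (n : ℝ) ^ (-α') ≤ 1 := by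
    intro n
    rcases Nat.eq_zero_or_pos n with h | h
    · subst h
      rw [Nat.cast_zero, Real.zero_rpow (by linarith)]
      norm_num
    · exact Real.rpow_le_one_of_one_le_of_nonpos (by exact_mod_cast h) (by linarith)
  by_cases hA : Set.range re = Set.univ
  · refine ⟨1, ?_⟩
    have hall : ∀ n : ℕ, {G : Fin n → Fin n → Bool |
        ∀ I : Fin r → Fin n, Function.Injective I → extCount H re G I ≤ 1} = Set.univ :=
      fun n => Set.eq_univ_of_forall (fun G I _ => caseA hA G I)
    have heq : (fun n : ℕ => erMeasure n ((n : ℝ) ^ (-α'))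
        {G | ∀ I : Fin r → Fin n, Function.Injective I → extCount H re G I ≤ 1})
        = fun _ => 1 := by
      funext n
      haveI := erMeasure_isProb n _ (hp0 n) (hp1 n)
      rw [hall n]
      exact measure_univ
    rw [heq]
    exact tendsto_const_nhds
  · -- the dense case
    set m := Fintype.card V with hm
    set eH := H.edgeSet.ncard with heH
    have hlt := dense_root hdense hA
    have ha₀m : (Set.univ \ Set.range re).ncard ≤ m := by
      calc (Set.univ \ Set.range re).ncard ≤ (Set.univ : Set V).ncard :=
          Set.ncard_le_ncard Set.diff_subset (Set.toFinite _)
        _ = m := by rw [Set.ncard_univ, Nat.card_eq_fintype_card]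
    set grid : Finset (ℕ × ℕ) := (Finset.range (m+1) ×ˢ Finset.range (eH+1)).filter
      (fun ab => (ab.1 : ℝ) < α' * ab.2) with hgrid
    have hgne : grid.Nonempty := by
      refine ⟨((Set.univ \ Set.range re).ncard, eH), Finset.mem_filter.2 ⟨?_, hlt⟩⟩
      exact Finset.mem_product.2 ⟨Finset.mem_range.2 (Nat.lt_succ_of_le ha₀m),
        Finset.mem_range.2 (Nat.lt_succ_self _)⟩
    set γ : ℝ := grid.inf' hgne (fun ab => α' * ab.2 - ab.1) with hγdef
    have hγpos : 0 < γ := by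
      rw [hγdef]
      exact (Finset.lt_inf'_iff hgne).2 (fun ab hab => by
        rw [Finset.mem_filter] at hab
        linarith [hab.2])
    have hγle : ∀ a b : ℕ, a ≤ m → b ≤ eH → (a : ℝ) < α' * b → γ ≤ α' * b - a := by
      intro a b ham hbe hab
      have hmem : (a, b) ∈ grid := by
        rw [hgrid, Finset.mem_filter]
        refine ⟨Finset.mem_product.2 ⟨Finset.mem_range.2 (Nat.lt_succ_of_le ham),
          Finset.mem_range.2 (Nat.lt_succ_of_le hbe)⟩, by simpa using hab⟩
      have h := Finset.inf'_le (fun ab : ℕ × ℕ => α' * ab.2 - ab.1) hmem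
      exact h
    obtain ⟨t, ht⟩ := exists_nat_gt ((r + 1) / γ)
    have htγ : (r : ℝ) + 1 < t * γ := by
      rw [div_lt_iff₀ hγpos] at ht
      linarith
    have hexp_neg : (0 : ℝ) < (t+1) * γ - r := by
      have : (t : ℝ) * γ ≤ ((t : ℝ) + 1) * γ := by nlinarith
      push_cast
      nlinarith
    refine ⟨(r + 2 * ((t+1) * eH)) ^ m, ?_⟩
    set κ := (r + 2 * ((t+1) * eH)) ^ m with hκ
    set bad : (n : ℕ) → Set (Fin n → Fin n → Bool) := fun n =>
      {G | ∃ I : Fin r → Fin n, Function.Injective I ∧ κ < extCount H re G I} with hbad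
    have hcompl : ∀ n : ℕ, {G : Fin n → Fin n → Bool |
        ∀ I : Fin r → Fin n, Function.Injective I → extCount H re G I ≤ κ} = (bad n)ᶜ := by
      intro n
      ext G
      simp only [hbad, Set.mem_compl_iff, Set.mem_setOf_eq, not_exists, not_and, not_lt]
    have hμ : ∀ n : ℕ, erMeasure n ((n : ℝ) ^ (-α'))
        {G : Fin n → Fin n → Bool |
          ∀ I : Fin r → Fin n, Function.Injective I → extCount H re G I ≤ κ}
        = 1 - erMeasure n ((n : ℝ) ^ (-α')) (bad n) := by
      intro n
      haveI := erMeasure_isProb n _ (hp0 n) (hp1 n)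
      rw [hcompl n, measure_compl (allMeasurable _) (measure_ne_top _ _), measure_univ]
    set D : ℝ := (((t+1) * m + 1 : ℕ) : ℝ) * ((((t+1) * m) ^ m) ^ (t+1) : ℕ) with hD
    have hbound : ∀ n : ℕ, 1 ≤ n → erMeasure n ((n : ℝ) ^ (-α')) (bad n)
        ≤ ENNReal.ofReal (D * (n : ℝ) ^ ((r : ℝ) - (t+1) * γ)) :=
      fun n hn => bad_measure_le hα₁ hdense hre hA γ hγle t hn
    have hup : Tendsto (fun n : ℕ => ENNReal.ofReal (D * (n : ℝ) ^ ((r : ℝ) - (t+1) * γ)))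
        atTop (nhds 0) := by
      have h1 : Tendsto (fun x : ℝ => x ^ (-(((t:ℝ)+1) * γ - r))) atTop (nhds 0) :=
        tendsto_rpow_neg_atTop (by push_cast at hexp_neg ⊢; linarith)
      have h2 : Tendsto (fun n : ℕ => ((n : ℝ)) ^ ((r : ℝ) - (t+1) * γ)) atTop (nhds 0) := by
        have h := h1.comp (tendsto_natCast_atTop_atTop (R := ℝ))
        have heq : (fun n : ℕ => ((n : ℝ)) ^ ((r : ℝ) - (t+1) * γ))
            = (fun x : ℝ => x ^ (-(((t : ℝ)+1) * γ - r))) ∘ (Nat.cast : ℕ → ℝ) := by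
          funext n
          simp only [Function.comp_apply]
          congr 1
          ring
        rw [heq]
        exact h
      have h3 : Tendsto (fun n : ℕ => D * ((n : ℝ)) ^ ((r : ℝ) - (t+1) * γ))
          atTop (nhds 0) := by
        have := h2.const_mul D
        rwa [mul_zero] at this
      have h4 := ENNReal.tendsto_ofReal h3
      rwa [ENNReal.ofReal_zero] at h4
    have htend0 : Tendsto (fun n : ℕ => erMeasure n ((n : ℝ) ^ (-α')) (bad n))
        atTop (nhds 0) := by
      refine tendsto_of_tendsto_of_tendsto_of_le_of_le' tendsto_const_nhds hup
        (Eventually.of_forall (fun n => by simp)) ?_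
      exact eventually_atTop.2 ⟨1, hbound⟩
    have hfinal := ENNReal.Tendsto.sub (tendsto_const_nhds (x := (1 : ℝ≥0∞)))
      htend0 (Or.inl ENNReal.one_ne_top)
    rw [tsub_zero] at hfinal
    have heq2 : (fun n : ℕ => erMeasure n ((n : ℝ) ^ (-α'))
        {G | ∀ I : Fin r → Fin n, Function.Injective I → extCount H re G I ≤ κ})
        = fun n => 1 - erMeasure n ((n : ℝ) ^ (-α')) (bad n) := funext hμ
    rw [heq2]
    exact hfinal
end
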